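/- arXiv:2002.09916 — 12 statements merged into one kernel-verified Lean document; each statement's English description precedes it below -/
import Mathlib

section
/- Given an instance of the uncapacitated facility location problem (UFL) with facilities F, clients C, opening costs q_f ≥ 0 and serving costs v_{cf} ≥ 0, construct a multi-item inventory lot-sizing instance with one period (NT=1), one supplier per facility with transaction cost O_f = q_f, one item per client with unit demand d^c_1 = 1, and purchase prices P_{cf} = v_{cf}. Then the UFL instance has a solution of cost at most K if and only if the constructed lot-sizing instance has a feasible solution of cost at most K. -/
/-- Reduction from uncapacitated facility location (UFL) to the
multi-item inventory lot-sizing problem with supplier selection with a single period: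
the UFL instance has a solution of cost at most `K` iff the constructed single-period
lot-sizing instance (one supplier per facility with transaction cost `q f`, one item per
client with unit demand, purchase prices `v c f`, big-M constant `M = |C|`) has a
feasible solution of cost at most `K`. -/
theorem ufl_reduces_to_lot_sizing
    (F C : Type*) [Fintype F] [Fintype C]
    (q : F → ℝ) (v : C → F → ℝ)
    (hq : ∀ f, 0 ≤ q f) (hv : ∀ c f, 0 ≤ v c f) (K : ℝ) :
    (∃ (F' : Finset F) (a : C → F), (∀ c, a c ∈ F') ∧
        (∑ f ∈ F', q f) + (∑ c, v c (a c)) ≤ K)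
    ↔
    (∃ (x : C → F → ℝ) (y : F → ℝ),
        (∀ f, y f = 0 ∨ y f = 1) ∧
        (∀ c f, 0 ≤ x c f) ∧
        (∀ c, 1 ≤ ∑ f, x c f) ∧
        (∀ c f, x c f ≤ (Fintype.card C : ℝ) * y f) ∧
        (∑ c, ∑ f, v c f * x c f) + (∑ f, q f * y f) ≤ K) := by
  classical
  constructor
  · rintro ⟨F', a, ha, hK⟩
    refine ⟨fun c f => if f = a c then 1 else 0, fun f => if f ∈ F' then 1 else 0,
      ?_, ?_, ?_, ?_, ?_⟩
    · intro f; by_cases h : f ∈ F' <;> simp [h]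
    · intro c f; by_cases h : f = a c <;> simp [h]
    · intro c; simp
    · intro c f
      by_cases h : f = a c
      · subst h
        simp [ha c]
        exact Fintype.card_pos_iff.mpr ⟨c⟩
      · simp [h]
        positivity
    · have h1 : ∀ c, (∑ f, v c f * (if f = a c then (1:ℝ) else 0)) = v c (a c) := by
        intro c; simp [mul_ite]
      have h2 : (∑ f, q f * (if f ∈ F' then (1:ℝ) else 0)) = ∑ f ∈ F', q f := by
        simp [mul_ite, Finset.sum_ite_mem]
      simp only [h1, h2]
      linarith
  · rintro ⟨x, y, hy, hx0, hx1, hxy, hK⟩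
    set S : C → Finset F := fun c => Finset.univ.filter (fun f => 0 < x c f) with hSdef
    have hSne : ∀ c, (S c).Nonempty := by
      intro c
      by_contra h
      have hz : ∀ f, x c f = 0 := by
        intro f
        have : f ∉ S c := fun hf => h ⟨f, hf⟩
        simp only [hSdef, Finset.mem_filter, Finset.mem_univ, true_and, not_lt] at this
        linarith [hx0 c f]
      have : ∑ f, x c f = 0 := Finset.sum_eq_zero (fun f _ => hz f)
      linarith [hx1 c]
    have hmin : ∀ c, ∃ f ∈ S c, ∀ g ∈ S c, v c f ≤ v c g := fun c =>
      (S c).exists_min_image (v c) (hSne c)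
    choose a haS hamin using hmin
    have hxa : ∀ c, 0 < x c (a c) := by
      intro c
      have := haS c
      simp only [hSdef, Finset.mem_filter, Finset.mem_univ, true_and] at this
      exact this
    have hya : ∀ c, y (a c) = 1 := by
      intro c
      rcases hy (a c) with h | h
      · exfalso
        have := hxy c (a c)
        rw [h, mul_zero] at this
        linarith [hxa c]
      · exact h
    refine ⟨Finset.univ.filter (fun f => y f = 1), a, ?_, ?_⟩
    · intro c; simp [hya c]
    · have hq1 : (∑ f ∈ Finset.univ.filter (fun f => y f = 1), q f) ≤ ∑ f, q f * y f := by
        calc (∑ f ∈ Finset.univ.filter (fun f => y f = 1), q f)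
            = ∑ f ∈ Finset.univ.filter (fun f => y f = 1), q f * y f := by
              apply Finset.sum_congr rfl
              intro f hf
              simp only [Finset.mem_filter] at hf
              rw [hf.2, mul_one]
          _ ≤ ∑ f, q f * y f := by
              apply Finset.sum_le_sum_of_subset_of_nonneg (Finset.filter_subset _ _)
              intro f _ _
              rcases hy f with h | h <;> rw [h] <;> [simp; simp [hq f]]
      have hv1 : ∀ c, v c (a c) ≤ ∑ f, v c f * x c f := by
        intro c
        have step1 : v c (a c) ≤ v c (a c) * ∑ f, x c f := by
          nlinarith [hv c (a c), hx1 c]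
        have step2 : v c (a c) * ∑ f, x c f = ∑ f, v c (a c) * x c f :=
          Finset.mul_sum _ _ _
        have step3 : (∑ f, v c (a c) * x c f) ≤ ∑ f, v c f * x c f := by
          apply Finset.sum_le_sum
          intro f _
          by_cases h : 0 < x c f
          · have hf : f ∈ S c := by simp [hSdef, h]
            exact mul_le_mul_of_nonneg_right (hamin c f hf) (le_of_lt h)
          · have : x c f = 0 := le_antisymm (not_lt.mp h) (hx0 c f)
            simp [this]
        linarith
      have hv2 : (∑ c, v c (a c)) ≤ ∑ c, ∑ f, v c f * x c f :=
        Finset.sum_le_sum (fun c _ => hv1 c)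
      linarith
end

section
/- The (l, S_j)-inequalities are valid: for any feasible solution (x, y) of the multi-item lot-sizing with supplier selection feasibility system — i.e., y^j_t ∈ {0,1}, x^{ij}_t ≥ 0, x^{ij}_t ≤ M y^j_t with M ≥ d^i_{1,NT}, and Σ_{j=1}^{NJ} Σ_{k=1}^{t} x^{ij}_k ≥ d^i_{1t} for all i, t — for any item i, any l ∈ {1,...,NT}, and any subsets S_j ⊆ {1,...,l} for each supplier j, it holds that Σ_{j=1}^{NJ} ( Σ_{u ∈ L∖S_j} x^{ij}_u + Σ_{u ∈ S_j} y^j_u · d^i_{ul} ) ≥ d^i_{1l}, where L = {1,...,l} and d^i_{ul} = Σ_{k=u}^{l} d^i_k. -/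
/-- Validity of the `(l, S_j)`-inequalities for the multi-item
lot-sizing with supplier selection feasibility system. -/
theorem lSj_inequalities_valid
    (NI NJ NT : ℕ)
    (d : Fin NI → Fin NT → ℝ) (hd : ∀ i t, 0 ≤ d i t)
    (M : ℝ) (hM : ∀ i, (∑ k, d i k) ≤ M)
    (x : Fin NI → Fin NJ → Fin NT → ℝ) (y : Fin NJ → Fin NT → ℝ)
    (hy : ∀ j t, y j t = 0 ∨ y j t = 1)
    (hx : ∀ i j t, 0 ≤ x i j t)
    (hxy : ∀ i j t, x i j t ≤ M * y j t)
    (hdem : ∀ i t, (∑ k ∈ Finset.Iic t, d i k) ≤ ∑ j, ∑ k ∈ Finset.Iic t, x i j k)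
    (i : Fin NI) (l : Fin NT)
    (S : Fin NJ → Finset (Fin NT)) (hS : ∀ j, S j ⊆ Finset.Iic l) :
    (∑ k ∈ Finset.Iic l, d i k) ≤
      ∑ j, ((∑ u ∈ Finset.Iic l \ S j, x i j u) +
            ∑ u ∈ S j, y j u * ∑ k ∈ Finset.Icc u l, d i k) := by
  classical
  have hx0 : ∀ j u, y j u = 0 → x i j u = 0 := by
    intro j u h
    have h1 := hxy i j u
    rw [h, mul_zero] at h1
    linarith [hx i j u]
  have hy0 : ∀ j u, 0 ≤ y j u := by
    intro j u; rcases hy j u with h | h <;> rw [h] <;> norm_num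
  have hdsum : ∀ s : Finset (Fin NT), 0 ≤ ∑ k ∈ s, d i k :=
    fun s => Finset.sum_nonneg fun k _ => hd i k
  have hBnn : ∀ j, 0 ≤ ∑ u ∈ S j, y j u * ∑ k ∈ Finset.Icc u l, d i k := by
    intro j
    exact Finset.sum_nonneg fun u _ => mul_nonneg (hy0 j u) (hdsum _)
  set T := Finset.univ.filter (fun u : Fin NT => ∃ j, u ∈ S j ∧ y j u = 1) with hT
  by_cases hTe : T = ∅
  · -- no covered period: x vanishes on each S j
    have hno : ∀ j u, u ∈ S j → y j u = 0 := by
      intro j u hu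
      rcases hy j u with h | h
      · exact h
      · exfalso
        have : u ∈ T := by
          rw [hT]; simp only [Finset.mem_filter, Finset.mem_univ, true_and]
          exact ⟨j, hu, h⟩
        rw [hTe] at this; exact Finset.notMem_empty u this
    have hA : ∀ j, (∑ u ∈ Finset.Iic l, x i j u) = ∑ u ∈ Finset.Iic l \ S j, x i j u := by
      intro j
      refine (Finset.sum_subset Finset.sdiff_subset ?_).symm
      intro u hu hnu
      have huS : u ∈ S j := by
        by_contra h
        exact hnu (Finset.mem_sdiff.mpr ⟨hu, h⟩)
      exact hx0 j u (hno j u huS)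
    calc (∑ k ∈ Finset.Iic l, d i k)
        ≤ ∑ j, ∑ k ∈ Finset.Iic l, x i j k := hdem i l
      _ = ∑ j, ∑ u ∈ Finset.Iic l \ S j, x i j u := by
          exact Finset.sum_congr rfl fun j _ => hA j
      _ ≤ _ := by
          refine Finset.sum_le_sum fun j _ => ?_
          linarith [hBnn j]
  · -- there is a covered period; take the minimal one
    have hTne : T.Nonempty := Finset.nonempty_of_ne_empty hTe
    set t := T.min' hTne with ht
    have htT : t ∈ T := T.min'_mem hTne
    have hmin : ∀ u ∈ T, t ≤ u := fun u hu => T.min'_le u hu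
    obtain ⟨j₀, hj₀S, hj₀y⟩ : ∃ j, t ∈ S j ∧ y j t = 1 := by
      have := htT; rw [hT] at this
      simpa using this
    have htl : t ≤ l := Finset.mem_Iic.mp (hS j₀ hj₀S)
    -- x vanishes on S j ∩ Iio t
    have hxz : ∀ j u, u ∈ S j → u < t → x i j u = 0 := by
      intro j u hu hut
      rcases hy j u with h | h
      · exact hx0 j u h
      · exfalso
        have huT : u ∈ T := by
          rw [hT]; simp only [Finset.mem_filter, Finset.mem_univ, true_and]
          exact ⟨j, hu, h⟩
        exact absurd (hmin u huT) (not_le.mpr hut)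
    -- demand up to Iio t
    have hdem' : (∑ k ∈ Finset.Iio t, d i k) ≤ ∑ j, ∑ k ∈ Finset.Iio t, x i j k := by
      by_cases h0 : t.val = 0
      · have he : Finset.Iio t = ∅ := by
          ext u
          simp only [Finset.mem_Iio, Finset.notMem_empty, iff_false, not_lt, Fin.le_def]
          omega
        simp [he]
      · have hlt : t.val - 1 < NT := by omega
        have he : Finset.Iio t = Finset.Iic ⟨t.val - 1, hlt⟩ := by
          ext u
          simp only [Finset.mem_Iio, Finset.mem_Iic, Fin.lt_def, Fin.le_def]
          omega
        rw [he]; exact hdem i _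
    -- per supplier: sum over Iio t of x ≤ sum over Iic l \ S j
    have hAj : ∀ j, (∑ u ∈ Finset.Iio t, x i j u) ≤ ∑ u ∈ Finset.Iic l \ S j, x i j u := by
      intro j
      have h1 : (∑ u ∈ Finset.Iio t, x i j u) = ∑ u ∈ Finset.Iio t \ S j, x i j u := by
        refine (Finset.sum_subset Finset.sdiff_subset ?_).symm
        intro u hu hnu
        have huS : u ∈ S j := by
          by_contra h
          exact hnu (Finset.mem_sdiff.mpr ⟨hu, h⟩)
        exact hxz j u huS (Finset.mem_Iio.mp hu)
      rw [h1]
      refine Finset.sum_le_sum_of_subset_of_nonneg ?_ fun u _ _ => hx i j u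
      intro u hu
      rw [Finset.mem_sdiff] at hu ⊢
      exact ⟨Finset.mem_Iic.mpr (le_of_lt (lt_of_lt_of_le (Finset.mem_Iio.mp hu.1) htl)), hu.2⟩
    -- the y-term of j₀ covers d_{t,l}
    have hBj : (∑ k ∈ Finset.Icc t l, d i k) ≤
        ∑ j, ∑ u ∈ S j, y j u * ∑ k ∈ Finset.Icc u l, d i k := by
      have h1 : (∑ k ∈ Finset.Icc t l, d i k) ≤
          ∑ u ∈ S j₀, y j₀ u * ∑ k ∈ Finset.Icc u l, d i k := by
        have := Finset.single_le_sum
          (f := fun u => y j₀ u * ∑ k ∈ Finset.Icc u l, d i k)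
          (fun u _ => mul_nonneg (hy0 j₀ u) (hdsum _)) hj₀S
        simpa [hj₀y] using this
      exact h1.trans (Finset.single_le_sum (f := fun j => ∑ u ∈ S j, y j u * ∑ k ∈ Finset.Icc u l, d i k)
        (fun j _ => hBnn j) (Finset.mem_univ j₀))
    -- split demand
    have hsplit : (∑ k ∈ Finset.Iic l, d i k) =
        (∑ k ∈ Finset.Iio t, d i k) + ∑ k ∈ Finset.Icc t l, d i k := by
      rw [← Finset.sum_union]
      · congr 1
        ext u
        simp only [Finset.mem_Iic, Finset.mem_union, Finset.mem_Iio, Finset.mem_Icc,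
          Fin.le_def, Fin.lt_def]
        have := htl
        rw [Fin.le_def] at this
        omega
      · rw [Finset.disjoint_left]
        intro u hu hu2
        rw [Finset.mem_Iio] at hu
        rw [Finset.mem_Icc] at hu2
        exact absurd hu2.1 (not_le.mpr hu)
    rw [hsplit, Finset.sum_add_distrib]
    exact add_le_add (hdem'.trans (Finset.sum_le_sum fun j _ => hAj j)) hBj
end

section
/- In the (l,S_j)-inequality validity proof, second case: if (x,y) is feasible and there exists j' and k' ∈ S_{j'} with y^{j'}_{k'} = 1, where k' is the earliest such period over all suppliers, then Σ_{j=1}^{NJ} Σ_{u=1}^{k'-1, u∈L∖S_j} x^{ij}_u + y^{j'}_{k'} d^i_{k',l} ≥ d^i_{1l}, and hence the full (l,S_j)-inequality holds. -/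
/-- Second case in the validity proof of the `(l,S_j)`-inequalities:
if `k'` is the earliest period (over all suppliers) belonging to some `S j` with setup
variable equal to one, realized by supplier `j'`, then
`∑_j ∑_{u < k', u ∈ L \ S j} x i j u + y j' k' * d^i_{k',l} ≥ d^i_{1l}`,
and hence the full `(l,S_j)`-inequality holds. -/
theorem lSj_validity_case_some_setup_one
    (NI NJ NT : ℕ)
    (d : Fin NI → Fin NT → ℝ) (hd : ∀ i t, 0 ≤ d i t)
    (M : ℝ) (hM : ∀ i, (∑ k, d i k) ≤ M)
    (x : Fin NI → Fin NJ → Fin NT → ℝ) (y : Fin NJ → Fin NT → ℝ)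
    (hy : ∀ j t, y j t = 0 ∨ y j t = 1)
    (hx : ∀ i j t, 0 ≤ x i j t)
    (hxy : ∀ i j t, x i j t ≤ M * y j t)
    (hdem : ∀ i t, (∑ k ∈ Finset.Iic t, d i k) ≤ ∑ j, ∑ k ∈ Finset.Iic t, x i j k)
    (i : Fin NI) (l : Fin NT)
    (S : Fin NJ → Finset (Fin NT)) (hS : ∀ j, S j ⊆ Finset.Iic l)
    (j' : Fin NJ) (k' : Fin NT) (hk'S : k' ∈ S j') (hyk' : y j' k' = 1)
    (hearliest : ∀ j, ∀ u ∈ S j, y j u = 1 → k' ≤ u) :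
    ((∑ k ∈ Finset.Iic l, d i k) ≤
        (∑ j, ∑ u ∈ Finset.Iio k' \ S j, x i j u) +
          y j' k' * ∑ k ∈ Finset.Icc k' l, d i k) ∧
    ((∑ k ∈ Finset.Iic l, d i k) ≤
        ∑ j, ((∑ u ∈ Finset.Iic l \ S j, x i j u) +
              ∑ u ∈ S j, y j u * ∑ k ∈ Finset.Icc u l, d i k)) := by
  have hk'l : k' ≤ l := Finset.mem_Iic.mp (hS j' hk'S)
  -- x vanishes on S j before k'
  have hx0 : ∀ j, ∀ u ∈ S j, u < k' → x i j u = 0 := by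
    intro j u huS hu
    have hy0 : y j u = 0 := by
      rcases hy j u with h | h
      · exact h
      · exact absurd (hearliest j u huS h) (not_le.mpr hu)
    have := hxy i j u
    rw [hy0, mul_zero] at this
    exact le_antisymm this (hx i j u)
  -- sum over Iio k' \ S j equals sum over Iio k'
  have hsum_eq : ∀ j, ∑ u ∈ Finset.Iio k' \ S j, x i j u = ∑ u ∈ Finset.Iio k', x i j u := by
    intro j
    refine Finset.sum_subset (Finset.sdiff_subset) ?_
    intro u hu hnot
    have huS : u ∈ S j := by
      by_contra h
      exact hnot (Finset.mem_sdiff.mpr ⟨hu, h⟩)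
    exact hx0 j u huS (Finset.mem_Iio.mp hu)
  -- split Iic l into Iio k' and Icc k' l
  have hk'l' : k'.val ≤ l.val := hk'l
  have hsplit : ∑ k ∈ Finset.Iic l, d i k
      = (∑ k ∈ Finset.Iio k', d i k) + ∑ k ∈ Finset.Icc k' l, d i k := by
    rw [← Finset.sum_union]
    · congr 1
      ext u
      simp only [Finset.mem_union, Finset.mem_Iio, Finset.mem_Icc, Finset.mem_Iic,
        Fin.lt_def, Fin.le_def]
      omega
    · rw [Finset.disjoint_left]
      intro a ha hb
      simp only [Finset.mem_Iio, Fin.lt_def] at ha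
      simp only [Finset.mem_Icc, Fin.le_def] at hb
      omega
  -- early demand covered by early production
  have hearly : ∑ k ∈ Finset.Iio k', d i k ≤ ∑ j, ∑ u ∈ Finset.Iio k', x i j u := by
    rcases Nat.eq_zero_or_pos k'.val with h0 | hpos
    · have : Finset.Iio k' = ∅ := by
        ext u
        simp only [Finset.mem_Iio, Finset.notMem_empty, iff_false, Fin.lt_def, h0]
        omega
      rw [this]
      simp
    · have hlt : k'.val - 1 < NT := by omega
      have ht : Finset.Iic (⟨k'.val - 1, hlt⟩ : Fin NT) = Finset.Iio k' := by
        ext u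
        simp only [Finset.mem_Iic, Finset.mem_Iio, Fin.le_def, Fin.lt_def]
        omega
      rw [← ht]
      exact hdem i _
  have first : (∑ k ∈ Finset.Iic l, d i k) ≤
      (∑ j, ∑ u ∈ Finset.Iio k' \ S j, x i j u) +
        y j' k' * ∑ k ∈ Finset.Icc k' l, d i k := by
    rw [hsplit, hyk', one_mul]
    gcongr
    calc ∑ k ∈ Finset.Iio k', d i k ≤ ∑ j, ∑ u ∈ Finset.Iio k', x i j u := hearly
      _ = ∑ j, ∑ u ∈ Finset.Iio k' \ S j, x i j u := by
          exact Finset.sum_congr rfl fun j _ => (hsum_eq j).symm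
  refine ⟨first, le_trans first ?_⟩
  have hy0le : ∀ j t, 0 ≤ y j t := by
    intro j t; rcases hy j t with h | h <;> rw [h] <;> norm_num
  have hterm : ∀ j,
      (∑ u ∈ Finset.Iio k' \ S j, x i j u) +
        (if j = j' then y j' k' * ∑ k ∈ Finset.Icc k' l, d i k else 0) ≤
      (∑ u ∈ Finset.Iic l \ S j, x i j u) +
        ∑ u ∈ S j, y j u * ∑ k ∈ Finset.Icc u l, d i k := by
    intro j
    apply add_le_add
    · refine Finset.sum_le_sum_of_subset_of_nonneg ?_ (fun u _ _ => hx i j u)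
      intro u hu
      simp only [Finset.mem_sdiff, Finset.mem_Iio, Finset.mem_Iic] at hu ⊢
      exact ⟨le_of_lt (lt_of_lt_of_le hu.1 hk'l), hu.2⟩
    · by_cases h : j = j'
      · subst h
        rw [if_pos rfl]
        exact Finset.single_le_sum (f := fun u => y j u * ∑ k ∈ Finset.Icc u l, d i k)
          (fun u _ => mul_nonneg (hy0le j u) (Finset.sum_nonneg fun k _ => hd i k)) hk'S
      · rw [if_neg h]
        exact Finset.sum_nonneg fun u _ => mul_nonneg (hy0le j u)
          (Finset.sum_nonneg fun k _ => hd i k)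
  calc (∑ j, ∑ u ∈ Finset.Iio k' \ S j, x i j u) + y j' k' * ∑ k ∈ Finset.Icc k' l, d i k
      = ∑ j, ((∑ u ∈ Finset.Iio k' \ S j, x i j u) +
          (if j = j' then y j' k' * ∑ k ∈ Finset.Icc k' l, d i k else 0)) := by
        rw [Finset.sum_add_distrib, Finset.sum_ite_eq' Finset.univ j']
        simp
    _ ≤ _ := Finset.sum_le_sum fun j _ => hterm j
end

section
/- The constraint matrix of the system {θ^{ij}_t + γ^{ij}_{tk} + φ^i_k ≥ 0 : i ∈ I, j ∈ J, t ∈ T, k ∈ T, t ≤ k} (rows indexed by (i,j,t,k), columns by the variables θ^{ij}_t, γ^{ij}_{tk}, φ^i_k, each row having exactly three +1 entries) is totally unimodular. -/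
/-!
Dropping the identity block of the `γ` columns, which preserves total unimodularity, each row
`(i,j,t,k)` becomes the edge joining `θ^{ij}_t` to `φ^i_k` in a bipartite multigraph, so it
suffices that bipartite incidence matrices are totally unimodular. In a square submatrix either
some row has at most one `1` among the chosen columns, and Laplace expansion along it reduces the
size, or every row meets both sides, and then the columns weighted `+1` on one side and `-1` on
the other sum to zero.
-/

open Matrix

section

variable {ι κ M : Type*} [DecidableEq κ] [Zero M] {g : ι → κ}

lemma Pi.single_comp_of_injective [DecidableEq ι] (hg : g.Injective) (j : ι) (a : M) :
    Pi.single (g j) a ∘ g = Pi.single j a := by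
  simpa [Pi.single] using Function.update_comp_eq_of_injective (0 : κ → M) hg j a

lemma Pi.single_comp_of_notMem_range {c : κ} (hc : c ∉ Set.range g) (a : M) :
    Pi.single c a ∘ g = 0 := by
  ext j
  exact Pi.single_eq_of_ne (fun h => hc ⟨j, h⟩) _

lemma Pi.single_comp_eq_zero_or_single [DecidableEq ι] (hg : g.Injective) (c : κ) (a : M) :
    Pi.single c a ∘ g = 0 ∨ ∃ j, Pi.single c a ∘ g = Pi.single j a := by
  by_cases hc : c ∈ Set.range g
  · obtain ⟨j, rfl⟩ := hc
    exact Or.inr ⟨j, Pi.single_comp_of_injective hg j a⟩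
  · exact Or.inl (Pi.single_comp_of_notMem_range hc a)

end

namespace Matrix

variable {R : Type*} [CommRing R]

lemma det_mem_range_signType_cast_of_row_eq_zero_or_single {k : ℕ}
    {M : Matrix (Fin (k + 1)) (Fin (k + 1)) R} (i : Fin (k + 1))
    (hrow : M i = 0 ∨ ∃ j, M i = Pi.single j 1)
    (hminor : ∀ j : Fin (k + 1),
      (M.submatrix i.succAbove j.succAbove).det ∈ Set.range SignType.cast) :
    M.det ∈ Set.range SignType.cast := by
  obtain hzero | ⟨j, hsingle⟩ := hrow
  · exact ⟨0, by simp [det_eq_zero_of_row_eq_zero i (congrFun hzero)]⟩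
  · rw [det_succ_row M i, Fintype.sum_eq_single j fun j' hj' => by simp [hsingle, hj'], hsingle,
      Pi.single_eq_same, mul_one]
    change _ ∈ MonoidHom.mrange SignType.castHom.toMonoidHom
    refine mul_mem (pow_mem ?_ _) (hminor j)
    exact ⟨-1, by simp⟩

variable {m X Y : Type*} [DecidableEq X] [DecidableEq Y]

lemma fromCols_submatrix_one_row (u : m → X) (v : m → Y) (r : m) :
    fromCols ((1 : Matrix X X R).submatrix u id) ((1 : Matrix Y Y R).submatrix v id) r =
      Pi.single (Sum.inl (u r)) 1 + Pi.single (Sum.inr (v r)) 1 := by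
  ext (x | y) <;> simp [one_eq_pi_single, Pi.single_apply]

/-- The incidence matrix of an arbitrary bipartite multigraph, edge `r` joining `u r` to `v r`. -/
theorem fromCols_submatrix_one_isTotallyUnimodular (u : m → X) (v : m → Y) :
    (fromCols ((1 : Matrix X X R).submatrix u id)
      ((1 : Matrix Y Y R).submatrix v id)).IsTotallyUnimodular := by
  set B := fromCols ((1 : Matrix X X R).submatrix u id) ((1 : Matrix Y Y R).submatrix v id)
  intro k f g hf hg
  induction k with
  | zero => exact ⟨1, by simp⟩
  | succ k ih =>
    have hrow (i : Fin (k + 1)) : B.submatrix f g i =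
        Pi.single (Sum.inl (u (f i))) 1 ∘ g + Pi.single (Sum.inr (v (f i))) 1 ∘ g := by
      ext j
      simp [B, fromCols_submatrix_one_row]
    by_cases hcover : ∀ i, Sum.inl (u (f i)) ∈ Set.range g ∧ Sum.inr (v (f i)) ∈ Set.range g
    · choose hx hy using hcover
      choose a ha using hx
      choose b hb using hy
      refine ⟨0, (det_eq_zero_of_mulVec_eq_zero_of_mem_nonZeroDivisors
        (v := fun j => Sum.elim (fun _ => 1) (fun _ => -1) (g j)) ?_ (i := 0) ?_).symm⟩
      · ext i
        rw [mulVec, hrow i, ← ha i, ← hb i, Pi.single_comp_of_injective hg,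
          Pi.single_comp_of_injective hg, add_dotProduct, single_dotProduct, single_dotProduct,
          ha, hb]
        simp
      · exact IsUnit.mem_nonZeroDivisors (by cases g 0 <;> simp)
    · obtain ⟨i, hi⟩ := not_forall.1 hcover
      refine det_mem_range_signType_cast_of_row_eq_zero_or_single i ?_ fun j =>
        ih _ _ (hf.comp Fin.succAbove_right_injective) (hg.comp Fin.succAbove_right_injective)
      rw [hrow i]
      rcases not_and_or.1 hi with hx | hy
      · rw [Pi.single_comp_of_notMem_range hx, zero_add]
        exact Pi.single_comp_eq_zero_or_single hg _ _
      · rw [Pi.single_comp_of_notMem_range hy, add_zero]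
        exact Pi.single_comp_eq_zero_or_single hg _ _

end Matrix

/-- The constraint matrix of the system
`θ^{ij}_t + γ^{ij}_{tk} + φ^i_k ≥ 0` (rows indexed by quadruples `(i,j,t,k)` with
`t ≤ k`, columns by the variables `θ^{ij}_t`, `γ^{ij}_{tk}`, `φ^i_k`, each row having
exactly three `+1` entries) is totally unimodular. -/
theorem dual_constraint_matrix_totally_unimodular
    (NI NJ NT : ℕ) :
    letI R := {p : Fin NI × Fin NJ × Fin NT × Fin NT // p.2.2.1 ≤ p.2.2.2}
    letI A : Matrix R ((Fin NI × Fin NJ × Fin NT) ⊕ R ⊕ (Fin NI × Fin NT)) ℚ :=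
      fun r c =>
        match c with
        | Sum.inl (i, j, t) =>
            if r.1.1 = i ∧ r.1.2.1 = j ∧ r.1.2.2.1 = t then 1 else 0
        | Sum.inr (Sum.inl r') => if r' = r then 1 else 0
        | Sum.inr (Sum.inr (i, k)) => if r.1.1 = i ∧ r.1.2.2.2 = k then 1 else 0
    A.IsTotallyUnimodular := by
  have hB := fromCols_submatrix_one_isTotallyUnimodular (R := ℚ)
    (fun r : {p : Fin NI × Fin NJ × Fin NT × Fin NT // p.2.2.1 ≤ p.2.2.2} =>
      (r.1.1, r.1.2.1, r.1.2.2.1))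
    (fun r => (r.1.1, r.1.2.2.2))
  refine (congrArg IsTotallyUnimodular ?_).mp
    (((fromCols_one_isTotallyUnimodular_iff _).2 hB).submatrix id
      (Sum.elim (Sum.inl ∘ Sum.inl) (Sum.elim Sum.inr (Sum.inl ∘ Sum.inr))))
  ext r (⟨i, j, t⟩ | r' | ⟨i, k⟩) <;> simp [one_apply, Prod.ext_iff, eq_comm]
end

section
/- Every (l,S_j)-inequality arises as a projected inequality: given item i, l ∈ T, L = {1,...,l}, and sets S_j ⊆ L, define φ^i_k = −1 for k ∈ L (0 otherwise), θ^{ij}_t = 1 for t ∈ L∖S_j (0 otherwise), and γ^{ij}_{tk} = 1 for t ∈ S_j and k ∈ L with k ≥ t (0 otherwise). Then (θ, γ, φ) satisfies θ^{ij}_t + γ^{ij}_{tk} + φ^i_k ≥ 0 for all valid indices with t ≤ k, θ ≥ 0, γ ≥ 0, and the resulting projected inequality Σ_{i,j,t} θ^{ij}_t x^{ij}_t + Σ_{i,j,t,k} γ^{ij}_{tk} d^i_k y^j_t + Σ_{i,t} φ^i_t d^i_t ≥ 0 is exactly the (l,S_j)-inequality Σ_j ( Σ_{u∈L∖S_j}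 x^{ij}_u + Σ_{u∈S_j} y^j_u d^i_{ul} ) ≥ d^i_{1l}. -/
private lemma sum_restrict {α : Type*} [Fintype α] {s : Finset α} {f g : α → ℝ}
    (h0 : ∀ t ∉ s, f t = 0) (heq : ∀ t ∈ s, f t = g t) :
    ∑ t : α, f t = ∑ t ∈ s, g t := by
  rw [← Finset.sum_subset (Finset.subset_univ s) (fun t _ ht => h0 t ht)]
  exact Finset.sum_congr rfl heq

/-- Every `(l,S_j)`-inequality arises as a projected inequality: the
indicated 0/±1 choice of dual multipliers `(θ, γ, φ)` is feasible for the dual system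
and the resulting projected inequality is exactly the `(l,S_j)`-inequality. -/
theorem lSj_from_projection
    (NI NJ NT : ℕ)
    (d : Fin NI → Fin NT → ℝ)
    (i : Fin NI) (l : Fin NT)
    (S : Fin NJ → Finset (Fin NT)) (hS : ∀ j, S j ⊆ Finset.Iic l) :
    letI θ : Fin NI → Fin NJ → Fin NT → ℝ :=
      fun i' j t => if i' = i ∧ t ∈ Finset.Iic l \ S j then 1 else 0
    letI γ : Fin NI → Fin NJ → Fin NT → Fin NT → ℝ :=
      fun i' j t k => if i' = i ∧ t ∈ S j ∧ k ∈ Finset.Icc t l then 1 else 0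
    letI φ : Fin NI → Fin NT → ℝ :=
      fun i' k => if i' = i ∧ k ≤ l then -1 else 0
    (∀ i' j t k, t ≤ k → 0 ≤ θ i' j t + γ i' j t k + φ i' k) ∧
    (∀ i' j t, 0 ≤ θ i' j t) ∧
    (∀ i' j t k, 0 ≤ γ i' j t k) ∧
    (∀ (x : Fin NI → Fin NJ → Fin NT → ℝ) (y : Fin NJ → Fin NT → ℝ),
      (∑ i' : Fin NI, ∑ j : Fin NJ, ∑ t : Fin NT, θ i' j t * x i' j t) +
      (∑ i' : Fin NI, ∑ j : Fin NJ, ∑ k : Fin NT, ∑ t ∈ Finset.Iic k,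
          γ i' j t k * (d i' k * y j t)) +
      (∑ i' : Fin NI, ∑ t : Fin NT, φ i' t * d i' t)
      =
      (∑ j : Fin NJ, ((∑ u ∈ Finset.Iic l \ S j, x i j u) +
            ∑ u ∈ S j, y j u * ∑ k ∈ Finset.Icc u l, d i k))
        - ∑ k ∈ Finset.Iic l, d i k) := by
  refine ⟨?_, ?_, ?_, ?_⟩
  · intro i' j t k htk
    by_cases hi : i' = i
    · subst hi
      by_cases hk : k ≤ l
      · by_cases ht : t ∈ S j
        · have hmem : k ∈ Finset.Icc t l := Finset.mem_Icc.mpr ⟨htk, hk⟩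
          simp [ht, hk, hmem]
        · have htl : t ≤ l := le_trans htk hk
          simp [ht, hk, htl]
      · simp [hk]; split_ifs <;> norm_num
    · simp [hi]
  · intro i' j t; positivity
  · intro i' j t k; positivity
  · intro x y
    have h1 : (∑ i' : Fin NI, ∑ j : Fin NJ, ∑ t : Fin NT,
        (if i' = i ∧ t ∈ Finset.Iic l \ S j then (1:ℝ) else 0) * x i' j t)
        = ∑ j : Fin NJ, ∑ u ∈ Finset.Iic l \ S j, x i j u := by
      rw [Finset.sum_eq_single i]
      · refine Finset.sum_congr rfl fun j _ => ?_
        exact sum_restrict (fun t ht => by simp [ht]) (fun t ht => by simp [ht])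
      · intro b _ hb; simp [hb]
      · simp
    have h3 : (∑ i' : Fin NI, ∑ t : Fin NT,
        (if i' = i ∧ t ≤ l then (-1:ℝ) else 0) * d i' t)
        = - ∑ k ∈ Finset.Iic l, d i k := by
      rw [Finset.sum_eq_single i]
      · rw [← Finset.sum_neg_distrib]
        exact sum_restrict (fun t ht => by simp at ht; simp [ht])
          (fun t ht => by simp at ht; simp [ht])
      · intro b _ hb; simp [hb]
      · simp
    have h2 : (∑ i' : Fin NI, ∑ j : Fin NJ, ∑ k : Fin NT, ∑ t ∈ Finset.Iic k,
        (if i' = i ∧ t ∈ S j ∧ k ∈ Finset.Icc t l then (1:ℝ) else 0) * (d i' k * y j t))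
        = ∑ j : Fin NJ, ∑ u ∈ S j, y j u * ∑ k ∈ Finset.Icc u l, d i k := by
      rw [Finset.sum_eq_single i]
      · refine Finset.sum_congr rfl fun j _ => ?_
        have hext : ∀ k : Fin NT, (∑ t ∈ Finset.Iic k,
            (if i = i ∧ t ∈ S j ∧ k ∈ Finset.Icc t l then (1:ℝ) else 0) * (d i k * y j t))
            = ∑ t : Fin NT,
            (if i = i ∧ t ∈ S j ∧ k ∈ Finset.Icc t l then (1:ℝ) else 0) * (d i k * y j t) := by
          intro k
          refine (Finset.sum_subset (Finset.subset_univ _) fun t _ ht => ?_)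
          have : ¬ (k ∈ Finset.Icc t l) := fun hk =>
            ht (Finset.mem_Iic.mpr (Finset.mem_Icc.mp hk).1)
          simp [this]
        refine (Finset.sum_congr rfl fun k _ => hext k).trans ?_
        rw [Finset.sum_comm]
        refine sum_restrict (s := S j) (fun t ht => by simp [ht]) (fun t ht => ?_)
        rw [Finset.mul_sum]
        exact sum_restrict (fun k hk => by simp [hk]) (fun k hk => by simp [ht, hk]; ring)
      · intro b _ hb; simp [hb]
      · simp
    simp only []
    rw [h1, h2, h3]
    rw [Finset.sum_add_distrib]
    ring
end

section
/- Lemma 2 (structure of 0/−1 dual solutions): if (θ, γ, φ) is a feasible integral solution to the dual system with θ, γ ∈ {0,1} and φ ∈ {−1,0}, and it is minimal in the sense that decreasing any positive θ or γ entry to 0 destroys feasibility, then for every (i,k) with φ^i_k = −1 and every j and t ≤ k, exactly one of the following holds: (a) θ^{ij}_t = 1 and γ^{ij}_{tk} = 0, or (b) θ^{ij}_t = 0 and γ^{ij}_{tk} = 1. -/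
/-- Feasibility of the dual system `θ^{ij}_t + γ^{ij}_{tk} + φ^i_k ≥ 0`, `θ ≥ 0`,
`γ ≥ 0` (the `γ` variables are only meaningful for `t ≤ k`). -/
def DualFeas {NI NJ NT : ℕ}
    (θ : Fin NI → Fin NJ → Fin NT → ℝ)
    (γ : Fin NI → Fin NJ → Fin NT → Fin NT → ℝ)
    (φ : Fin NI → Fin NT → ℝ) : Prop :=
  (∀ i j t k, t ≤ k → 0 ≤ θ i j t + γ i j t k + φ i k) ∧
  (∀ i j t, 0 ≤ θ i j t) ∧
  (∀ i j t k, 0 ≤ γ i j t k)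

/-- Structure of minimal 0/−1 dual solutions: if `(θ, γ, φ)` is
feasible with `θ, γ ∈ {0,1}`, `φ ∈ {−1,0}`, and minimal (decreasing any positive `θ`
or `γ` entry to `0` destroys feasibility), then for every `(i,k)` with `φ i k = −1`
and every `j`, `t ≤ k`, exactly one of (a) `θ i j t = 1 ∧ γ i j t k = 0` or
(b) `θ i j t = 0 ∧ γ i j t k = 1` holds. -/
theorem minimal_dual_solution_structure
    (NI NJ NT : ℕ)
    (θ : Fin NI → Fin NJ → Fin NT → ℝ)
    (γ : Fin NI → Fin NJ → Fin NT → Fin NT → ℝ)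
    (φ : Fin NI → Fin NT → ℝ)
    (hfeas : DualFeas θ γ φ)
    (hθ01 : ∀ i j t, θ i j t = 0 ∨ θ i j t = 1)
    (hγ01 : ∀ i j t k, γ i j t k = 0 ∨ γ i j t k = 1)
    (hφ : ∀ i k, φ i k = -1 ∨ φ i k = 0)
    (hminθ : ∀ i₀ j₀ t₀, θ i₀ j₀ t₀ = 1 →
      ¬ DualFeas (fun i j t => if i = i₀ ∧ j = j₀ ∧ t = t₀ then 0 else θ i j t) γ φ)
    (hminγ : ∀ i₀ j₀ t₀ k₀, t₀ ≤ k₀ → γ i₀ j₀ t₀ k₀ = 1 →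
      ¬ DualFeas θ
          (fun i j t k => if i = i₀ ∧ j = j₀ ∧ t = t₀ ∧ k = k₀ then 0 else γ i j t k)
          φ) :
    ∀ i k j t, t ≤ k → φ i k = -1 →
      Xor' (θ i j t = 1 ∧ γ i j t k = 0) (θ i j t = 0 ∧ γ i j t k = 1) := by
  intro i k j t htk hφik
  obtain ⟨hcon, hθ0, hγ0⟩ := hfeas
  have hsum := hcon i j t k htk
  rw [hφik] at hsum
  -- not both zero
  have hnotboth0 : ¬ (θ i j t = 0 ∧ γ i j t k = 0) := by
    rintro ⟨h1, h2⟩; rw [h1, h2] at hsum; linarith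
  -- not both one
  have hnotboth1 : ¬ (θ i j t = 1 ∧ γ i j t k = 1) := by
    rintro ⟨h1, h2⟩
    apply hminγ i j t k htk h2
    refine ⟨?_, hθ0, ?_⟩
    · intro i' j' t' k' h'
      by_cases hc : i' = i ∧ j' = j ∧ t' = t ∧ k' = k
      · simp only [hc, if_true]
        obtain ⟨hi, hj, ht, hk⟩ := hc
        subst hi; subst hj; subst ht; subst hk
        rw [h1, hφik]; norm_num
      · simp only [hc, if_false]
        exact hcon i' j' t' k' h'
    · intro i' j' t' k'
      by_cases hc : i' = i ∧ j' = j ∧ t' = t ∧ k' = k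
      · simp [hc]
      · simp only [hc, if_false]; exact hγ0 i' j' t' k'
  rcases hθ01 i j t with h1 | h1 <;> rcases hγ01 i j t k with h2 | h2
  · exact absurd ⟨h1, h2⟩ hnotboth0
  · exact Or.inr ⟨⟨h1, h2⟩, fun ⟨a, _⟩ => by rw [h1] at a; norm_num at a⟩
  · exact Or.inl ⟨⟨h1, h2⟩, fun ⟨a, _⟩ => by rw [h1] at a; norm_num at a⟩
  · exact absurd ⟨h1, h2⟩ hnotboth1
end

section
/- Correctness of the dynamic-programming recursion for α: fix an item i and a fractional solution (x̄, ȳ) with x̄, ȳ ≥ 0 and nonnegative demands d^i_k. For each supplier j and period k, let l^j_k be the first period l ≥ k such that x̄^{ij}_k ≤ d^i_{kl} ȳ^j_k (set l^j_k = NT+1 if no such l ≤ NT exists). Define α^i_l = Σ_{j=1}^{NJ} Σ_{k=1}^{l} min{ x̄^{ij}_k, d^i_{kl} ȳ^j_k }, Y^j_l = {k ≤ l : l^j_k > l}, Z^j_l = {k ≤ l : l^j_k = l}. Then α^i_0 = 0 and for all l ≥ 1: α^i_l = α^i_{l−1} + d^i_l · Σ_j Σ_{k ∈ Y^j_l} ȳ^j_k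 + Σ_j Σ_{k ∈ Z^j_l} ( x̄^{ij}_k − d^i_{k,l−1} ȳ^j_k ). -/
/-- Correctness of the dynamic-programming recursion for the
separation quantities `α`: with `lk j k` the first period `l ≥ k` such that
`x̄ j k ≤ d_{kl} ȳ j k` (and `NT+1` if none exists up to `NT`),
`α l = ∑_j ∑_{k=1}^{l} min(x̄ j k, d_{kl} ȳ j k)` satisfies `α 0 = 0` and
`α l = α (l−1) + d l · ∑_j ∑_{k ∈ Y_l} ȳ j k + ∑_j ∑_{k ∈ Z_l} (x̄ j k − d_{k,l−1} ȳ j k)`. -/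
theorem separation_DP_recursion_correct
    (NJ NT : ℕ)
    (d : ℕ → ℝ) (hd : ∀ k, 0 ≤ d k)
    (xb : Fin NJ → ℕ → ℝ) (yb : Fin NJ → ℕ → ℝ)
    (hxb : ∀ j k, 0 ≤ xb j k) (hyb : ∀ j k, 0 ≤ yb j k)
    (D : ℕ → ℕ → ℝ) (hD : ∀ k l, D k l = ∑ u ∈ Finset.Icc k l, d u)
    (lk : Fin NJ → ℕ → ℕ)
    (hlk_lb : ∀ j k, k ≤ lk j k)
    (hlk_ub : ∀ j k, lk j k ≤ NT + 1)
    (hlk_first : ∀ j k l, k ≤ l → l < lk j k → D k l * yb j k < xb j k)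
    (hlk_holds : ∀ j k, lk j k ≤ NT → xb j k ≤ D k (lk j k) * yb j k)
    (α : ℕ → ℝ)
    (hα : ∀ l, α l = ∑ j : Fin NJ, ∑ k ∈ Finset.Icc 1 l, min (xb j k) (D k l * yb j k))
    (Y Z : Fin NJ → ℕ → Finset ℕ)
    (hY : ∀ j l, Y j l = (Finset.Icc 1 l).filter (fun k => l < lk j k))
    (hZ : ∀ j l, Z j l = (Finset.Icc 1 l).filter (fun k => lk j k = l)) :
    α 0 = 0 ∧
    ∀ l ∈ Finset.Icc 1 NT,
      α l = α (l - 1) + d l * (∑ j : Fin NJ, ∑ k ∈ Y j l, yb j k) +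
              ∑ j : Fin NJ, ∑ k ∈ Z j l, (xb j k - D k (l - 1) * yb j k) := by
  constructor
  · rw [hα]; simp
  · intro l hl
    simp only [Finset.mem_Icc] at hl
    obtain ⟨hl1, hlNT⟩ := hl
    obtain ⟨m, rfl⟩ : ∃ m, l = m + 1 := ⟨l - 1, (Nat.succ_pred_eq_of_pos hl1).symm⟩
    simp only [Nat.add_sub_cancel]
    rw [hα, hα]
    have hDmono : ∀ k a b, a ≤ b → D k a ≤ D k b := by
      intro k a b hab
      rw [hD, hD]
      exact Finset.sum_le_sum_of_subset_of_nonneg (Finset.Icc_subset_Icc_right hab)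
        (fun u _ _ => hd u)
    have key : ∀ j : Fin NJ, ∑ k ∈ Finset.Icc 1 (m+1), min (xb j k) (D k (m+1) * yb j k)
        = ∑ k ∈ Finset.Icc 1 m, min (xb j k) (D k m * yb j k)
          + d (m+1) * ∑ k ∈ Y j (m+1), yb j k
          + ∑ k ∈ Z j (m+1), (xb j k - D k m * yb j k) := by
      intro j
      have hsplit : ∀ k ∈ Finset.Icc 1 (m+1),
          min (xb j k) (D k (m+1) * yb j k)
            = (if k ≤ m then min (xb j k) (D k m * yb j k) else 0)
              + (if m + 1 < lk j k then d (m+1) * yb j k else 0)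
              + (if lk j k = m + 1 then xb j k - D k m * yb j k else 0) := by
        intro k hk
        simp only [Finset.mem_Icc] at hk
        have hk2 : k ≤ m + 1 := hk.2
        have hDstep : D k (m+1) = D k m + d (m+1) := by
          rw [hD, hD, Finset.sum_Icc_succ_top hk2]
        rcases lt_trichotomy (m+1) (lk j k) with hcase | hcase | hcase
        · -- Y case
          have h1 : D k (m+1) * yb j k < xb j k := hlk_first j k (m+1) hk2 hcase
          rw [min_eq_right h1.le]
          by_cases hkm : k ≤ m
          · have h2 : D k m * yb j k < xb j k := hlk_first j k m hkm (by omega)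
            rw [if_pos hkm, min_eq_right h2.le, if_pos hcase,
              if_neg (show ¬ lk j k = m + 1 by omega), hDstep]
            ring
          · have hke : k = m + 1 := by omega
            subst hke
            rw [if_neg hkm, if_pos hcase, if_neg (show ¬ lk j (m+1) = m + 1 by omega)]
            have h0 : D (m+1) m = 0 := by
              rw [hD, Finset.Icc_eq_empty (by omega), Finset.sum_empty]
            rw [hDstep, h0]; ring
        · -- Z case
          have hle : lk j k ≤ NT := by omega
          have h1 : xb j k ≤ D k (m+1) * yb j k := by
            rw [hcase]; exact hlk_holds j k hle
          rw [min_eq_left h1]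
          by_cases hkm : k ≤ m
          · have h2 : D k m * yb j k < xb j k := hlk_first j k m hkm (by omega)
            rw [if_pos hkm, min_eq_right h2.le, if_neg (show ¬ m + 1 < lk j k by omega),
              if_pos hcase.symm]
            ring
          · have hke : k = m + 1 := by omega
            subst hke
            rw [if_neg hkm, if_neg (show ¬ m + 1 < lk j (m+1) by omega), if_pos hcase.symm]
            have h0 : D (m+1) m = 0 := by
              rw [hD, Finset.Icc_eq_empty (by omega), Finset.sum_empty]
            rw [h0]; ring
        · -- already satisfied before l
          have hle : lk j k ≤ NT := by omega
          have hxle : xb j k ≤ D k (lk j k) * yb j k := hlk_holds j k hle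
          have hkm : k ≤ m := le_trans (hlk_lb j k) (by omega)
          have h1 : xb j k ≤ D k m * yb j k :=
            hxle.trans (mul_le_mul_of_nonneg_right (hDmono k _ _ (by omega)) (hyb j k))
          have h2 : xb j k ≤ D k (m+1) * yb j k :=
            hxle.trans (mul_le_mul_of_nonneg_right (hDmono k _ _ (by omega)) (hyb j k))
          rw [min_eq_left h2, if_pos hkm, min_eq_left h1,
            if_neg (show ¬ m + 1 < lk j k by omega), if_neg (show ¬ lk j k = m + 1 by omega)]
          ring
      rw [Finset.sum_congr rfl hsplit, Finset.sum_add_distrib, Finset.sum_add_distrib]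
      congr 1
      congr 1
      · rw [← Finset.sum_filter]
        apply Finset.sum_congr _ (fun _ _ => rfl)
        ext k
        simp only [Finset.mem_filter, Finset.mem_Icc]
        omega
      · rw [← Finset.sum_filter, hY, Finset.mul_sum]
      · rw [← Finset.sum_filter, hZ]
    calc ∑ j : Fin NJ, ∑ k ∈ Finset.Icc 1 (m+1), min (xb j k) (D k (m+1) * yb j k)
        = ∑ j : Fin NJ, (∑ k ∈ Finset.Icc 1 m, min (xb j k) (D k m * yb j k)
            + d (m+1) * ∑ k ∈ Y j (m+1), yb j k
            + ∑ k ∈ Z j (m+1), (xb j k - D k m * yb j k)) :=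
          Finset.sum_congr rfl (fun j _ => key j)
      _ = _ := by
          rw [Finset.sum_add_distrib, Finset.sum_add_distrib, ← Finset.mul_sum]
end

section
/- Separation characterization: a fractional point (x̄, ȳ) ≥ 0 violates some (l,S_j)-inequality for item i and horizon l if and only if Σ_{j=1}^{NJ} Σ_{k=1}^{l} min{ x̄^{ij}_k, d^i_{kl} ȳ^j_k } < d^i_{1l}. Moreover, the minimum over all choices of sets S_j ⊆ {1,...,l} of the left-hand side Σ_j ( Σ_{u∈L∖S_j} x̄^{ij}_u + Σ_{u∈S_j} ȳ^j_u d^i_{ul} ) exactly equals Σ_j Σ_{k=1}^{l} min{ x̄^{ij}_k, d^i_{kl} ȳ^j_k }, attained by placing k in S_j exactly when d^i_{kl} ȳ^j_k ≤ x̄^{ij}_k. -/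
/-- Separation characterization: a nonnegative fractional point
violates some `(l,S_j)`-inequality for item `i` and horizon `l` iff
`∑_j ∑_{k≤l} min(x̄^{ij}_k, d_{kl} ȳ^j_k) < d_{1l}`; moreover this quantity is the
minimum over all `S_j ⊆ {1,…,l}` of the `(l,S_j)` left-hand side, attained by putting
`k` into `S_j` exactly when `d_{kl} ȳ^j_k ≤ x̄^{ij}_k`. -/
theorem lSj_separation_characterization
    (NJ NT : ℕ)
    (d : Fin NT → ℝ) (hd : ∀ k, 0 ≤ d k)
    (xb : Fin NJ → Fin NT → ℝ) (yb : Fin NJ → Fin NT → ℝ)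
    (hxb : ∀ j k, 0 ≤ xb j k) (hyb : ∀ j k, 0 ≤ yb j k)
    (l : Fin NT) :
    letI D : Fin NT → ℝ := fun u => ∑ k ∈ Finset.Icc u l, d k
    letI lhs : (Fin NJ → Finset (Fin NT)) → ℝ := fun S =>
      ∑ j, ((∑ u ∈ Finset.Iic l \ S j, xb j u) + ∑ u ∈ S j, yb j u * D u)
    letI αl : ℝ := ∑ j, ∑ k ∈ Finset.Iic l, min (xb j k) (D k * yb j k)
    ((∃ S : Fin NJ → Finset (Fin NT), (∀ j, S j ⊆ Finset.Iic l) ∧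
        lhs S < ∑ k ∈ Finset.Iic l, d k)
      ↔ αl < ∑ k ∈ Finset.Iic l, d k) ∧
    (∀ S : Fin NJ → Finset (Fin NT), (∀ j, S j ⊆ Finset.Iic l) → αl ≤ lhs S) ∧
    (lhs (fun j => (Finset.Iic l).filter (fun k => D k * yb j k ≤ xb j k)) = αl) := by

  set D : Fin NT → ℝ := fun u => ∑ k ∈ Finset.Icc u l, d k with hD
  set lhs : (Fin NJ → Finset (Fin NT)) → ℝ := fun S =>
      ∑ j, ((∑ u ∈ Finset.Iic l \ S j, xb j u) + ∑ u ∈ S j, yb j u * D u) with hlhs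
  set αl : ℝ := ∑ j, ∑ k ∈ Finset.Iic l, min (xb j k) (D k * yb j k) with hαl
  have key : ∀ (S : Fin NJ → Finset (Fin NT)), (∀ j, S j ⊆ Finset.Iic l) →
      lhs S = ∑ j, ∑ u ∈ Finset.Iic l, (if u ∈ S j then yb j u * D u else xb j u) := by
    intro S hS
    refine Finset.sum_congr rfl fun j _ => ?_
    rw [← Finset.sum_sdiff (hS j)]
    congr 1
    · exact Finset.sum_congr rfl fun u hu => by
        rw [if_neg (Finset.mem_sdiff.mp hu).2]
    · exact Finset.sum_congr rfl fun u hu => by rw [if_pos hu]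
  have hle : ∀ S : Fin NJ → Finset (Fin NT), (∀ j, S j ⊆ Finset.Iic l) → αl ≤ lhs S := by
    intro S hS
    rw [key S hS, hαl]
    refine Finset.sum_le_sum fun j _ => Finset.sum_le_sum fun u _ => ?_
    by_cases h : u ∈ S j
    · rw [if_pos h, mul_comm]; exact min_le_right _ _
    · rw [if_neg h]; exact min_le_left _ _
  have hattain : lhs (fun j => (Finset.Iic l).filter (fun k => D k * yb j k ≤ xb j k)) = αl := by
    rw [key _ (fun j => Finset.filter_subset _ _), hαl]
    refine Finset.sum_congr rfl fun j _ => Finset.sum_congr rfl fun u hu => ?_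
    by_cases h : D u * yb j u ≤ xb j u
    · rw [if_pos (Finset.mem_filter.mpr ⟨hu, h⟩), min_eq_right h, mul_comm]
    · have hm : u ∉ (Finset.Iic l).filter (fun k => D k * yb j k ≤ xb j k) :=
        fun hm => h (Finset.mem_filter.mp hm).2
      rw [if_neg hm, min_eq_left (le_of_not_ge h)]
  refine ⟨⟨fun ⟨S, hS, hlt⟩ => lt_of_le_of_lt (hle S hS) hlt,
    fun h => ⟨_, fun j => Finset.filter_subset _ _, hattain ▸ h⟩⟩, hle, hattain⟩
end

section
/- Equivalence of the standard and facility-location formulations: every feasible solution (X, y) to the facility location system {Σ_j Σ_{t≤k} X^{ij}_{tk} = d^i_k for all i,k; 0 ≤ X^{ij}_{tk} ≤ d^i_k y^j_t; y binary} projects via x^{ij}_t := Σ_{k≥t} X^{ij}_{tk} to a feasible solution of the standard system {Σ_j Σ_{k≤t} x^{ij}_k ≥ d^i_{1t} for all i,t; 0 ≤ x^{ij}_t ≤ M y^j_t with M = max_i d^i_{1,NT}; y binary}, with equal objective value, where the objectives are Σ P_{ij} X^{ij}_{tk} + Σ O_j y^j_t + Σ_i H_i Σ_t (Σ_{u≤t}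 Σ_{k>t} X^{ij}_{uk}) and Σ P_{ij} x^{ij}_t + Σ O_j y^j_t + Σ_i H_i Σ_t (Σ_j Σ_{k≤t} x^{ij}_k − d^i_{1t}) respectively. -/
section Aux

variable {n : ℕ}

private lemma key_split (t : Fin n) (f : Fin n → Fin n → ℝ) :
    ∑ u ∈ Finset.Iic t, ∑ k ∈ Finset.Ici u, f u k
      = (∑ k ∈ Finset.Iic t, ∑ u ∈ Finset.Iic k, f u k)
        + ∑ u ∈ Finset.Iic t, ∑ k ∈ Finset.Ioi t, f u k := by
  have h1 : ∀ u ∈ Finset.Iic t, ∑ k ∈ Finset.Ici u, f u k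
      = ∑ k ∈ Finset.Icc u t, f u k + ∑ k ∈ Finset.Ioi t, f u k := by
    intro u hu
    have hu' : u ≤ t := Finset.mem_Iic.mp hu
    have hset : Finset.Icc u t ∪ Finset.Ioi t = Finset.Ici u := by
      ext k
      simp only [Finset.mem_union, Finset.mem_Icc, Finset.mem_Ioi, Finset.mem_Ici,
        Fin.le_def, Fin.lt_def] at *
      omega
    have hdisj : Disjoint (Finset.Icc u t) (Finset.Ioi t) := by
      rw [Finset.disjoint_left]
      intro k hk hk'
      exact absurd (Finset.mem_Icc.mp hk).2 (not_le.mpr (Finset.mem_Ioi.mp hk'))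
    rw [← hset, Finset.sum_union hdisj]
  rw [Finset.sum_congr rfl h1, Finset.sum_add_distrib]
  congr 1
  refine Finset.sum_comm' ?_
  intro u k
  simp only [Finset.mem_Iic, Finset.mem_Icc]
  constructor
  · rintro ⟨_, h2, h3⟩; exact ⟨h2, h3⟩
  · rintro ⟨h2, h3⟩; exact ⟨h2.trans h3, h2, h3⟩

private lemma swap_tri (f : Fin n → Fin n → ℝ) :
    ∑ k, ∑ t ∈ Finset.Iic k, f t k = ∑ t, ∑ k ∈ Finset.Ici t, f t k := by
  refine Finset.sum_comm' ?_
  intro k t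
  simp only [Finset.mem_univ, Finset.mem_Iic, Finset.mem_Ici, true_and, and_true]

end Aux

/-- Every feasible solution of the facility location system projects,
via `x^{ij}_t := ∑_{k≥t} X^{ij}_{tk}`, to a feasible solution of the standard system
(with `M = max_i d^i_{1,NT}`), with equal objective value. -/
theorem facility_location_projects_to_standard
    (NI NJ NT : ℕ) (hNI : 0 < NI)
    (d : Fin NI → Fin NT → ℝ) (hd : ∀ i k, 0 ≤ d i k)
    (P : Fin NI → Fin NJ → ℝ) (O : Fin NJ → ℝ) (H : Fin NI → ℝ)
    (hP : ∀ i j, 0 ≤ P i j) (hO : ∀ j, 0 ≤ O j) (hH : ∀ i, 0 ≤ H i)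
    (X : Fin NI → Fin NJ → Fin NT → Fin NT → ℝ) (y : Fin NJ → Fin NT → ℝ)
    (hy : ∀ j t, y j t = 0 ∨ y j t = 1)
    (hX : ∀ i j t k, 0 ≤ X i j t k)
    (hdem : ∀ i k, (∑ j, ∑ t ∈ Finset.Iic k, X i j t k) = d i k)
    (hXy : ∀ i j t k, t ≤ k → X i j t k ≤ d i k * y j t)
    (x : Fin NI → Fin NJ → Fin NT → ℝ)
    (hx : x = fun i j t => ∑ k ∈ Finset.Ici t, X i j t k)
    (M : ℝ)
    (hM : M = Finset.univ.sup' ⟨⟨0, hNI⟩, Finset.mem_univ _⟩ (fun i => ∑ k, d i k)) :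
    (∀ i t, (∑ k ∈ Finset.Iic t, d i k) ≤ ∑ j, ∑ k ∈ Finset.Iic t, x i j k) ∧
    (∀ i j t, 0 ≤ x i j t) ∧
    (∀ i j t, x i j t ≤ M * y j t) ∧
    ((∑ i : Fin NI, ∑ j : Fin NJ, ∑ k : Fin NT, ∑ t ∈ Finset.Iic k, P i j * X i j t k) +
       (∑ j : Fin NJ, ∑ t : Fin NT, O j * y j t) +
       (∑ i : Fin NI, H i * ∑ t : Fin NT,
          ∑ j : Fin NJ, ∑ u ∈ Finset.Iic t, ∑ k ∈ Finset.Ioi t, X i j u k)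
     =
     (∑ i : Fin NI, ∑ j : Fin NJ, ∑ t : Fin NT, P i j * x i j t) +
       (∑ j : Fin NJ, ∑ t : Fin NT, O j * y j t) +
       (∑ i : Fin NI, H i * ∑ t : Fin NT,
          ((∑ j : Fin NJ, ∑ k ∈ Finset.Iic t, x i j k) - ∑ k ∈ Finset.Iic t, d i k))) := by
  -- main balance identity:
  have hbal : ∀ (i : Fin NI) (t : Fin NT),
      (∑ j, ∑ k ∈ Finset.Iic t, x i j k)
        = (∑ k ∈ Finset.Iic t, d i k)
          + ∑ j, ∑ u ∈ Finset.Iic t, ∑ k ∈ Finset.Ioi t, X i j u k := by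
    intro i t
    have h1 : ∀ j : Fin NJ, ∑ k ∈ Finset.Iic t, x i j k
        = (∑ k ∈ Finset.Iic t, ∑ u ∈ Finset.Iic k, X i j u k)
          + ∑ u ∈ Finset.Iic t, ∑ k ∈ Finset.Ioi t, X i j u k := by
      intro j
      simp only [hx]
      exact key_split t (fun u k => X i j u k)
    rw [Finset.sum_congr rfl (fun j _ => h1 j), Finset.sum_add_distrib]
    congr 1
    rw [Finset.sum_comm]
    exact Finset.sum_congr rfl fun k _ => hdem i k
  refine ⟨?_, ?_, ?_, ?_⟩
  · -- demand satisfaction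
    intro i t
    rw [hbal i t]
    have : 0 ≤ ∑ j, ∑ u ∈ Finset.Iic t, ∑ k ∈ Finset.Ioi t, X i j u k :=
      Finset.sum_nonneg fun j _ => Finset.sum_nonneg fun u _ =>
        Finset.sum_nonneg fun k _ => hX i j u k
    linarith
  · intro i j t
    rw [hx]
    exact Finset.sum_nonneg fun k _ => hX i j t k
  · -- x ≤ M y
    intro i j t
    rcases hy j t with h0 | h1
    · have : ∀ k ∈ Finset.Ici t, X i j t k = 0 := by
        intro k hk
        have := hXy i j t k (Finset.mem_Ici.mp hk)
        rw [h0, mul_zero] at this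
        exact le_antisymm this (hX i j t k)
      rw [hx]
      simp only [Finset.sum_congr rfl this, Finset.sum_const_zero, h0, mul_zero]
      exact le_refl 0
    · rw [h1, mul_one, hx]
      have hle1 : ∑ k ∈ Finset.Ici t, X i j t k ≤ ∑ k ∈ Finset.Ici t, d i k := by
        refine Finset.sum_le_sum fun k hk => ?_
        have := hXy i j t k (Finset.mem_Ici.mp hk)
        rwa [h1, mul_one] at this
      have hle2 : ∑ k ∈ Finset.Ici t, d i k ≤ ∑ k, d i k :=
        Finset.sum_le_sum_of_subset_of_nonneg (Finset.subset_univ _)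
          (fun k _ _ => hd i k)
      have hle3 : (∑ k, d i k) ≤ M := by
        rw [hM]
        exact Finset.le_sup' (fun i => ∑ k, d i k) (Finset.mem_univ i)
      linarith
  · -- objective equality
    have hPterm : ∀ (i : Fin NI) (j : Fin NJ),
        (∑ k : Fin NT, ∑ t ∈ Finset.Iic k, P i j * X i j t k)
          = ∑ t : Fin NT, P i j * x i j t := by
      intro i j
      rw [swap_tri (fun t k => P i j * X i j t k)]
      refine Finset.sum_congr rfl fun t _ => ?_
      rw [hx, Finset.mul_sum]
    have hHterm : ∀ i : Fin NI,
        (∑ t : Fin NT, ∑ j : Fin NJ, ∑ u ∈ Finset.Iic t, ∑ k ∈ Finset.Ioi t, X i j u k)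
          = ∑ t : Fin NT,
            ((∑ j : Fin NJ, ∑ k ∈ Finset.Iic t, x i j k) - ∑ k ∈ Finset.Iic t, d i k) := by
      intro i
      refine Finset.sum_congr rfl fun t _ => ?_
      rw [hbal i t]
      ring
    congr 1
    · congr 1
      exact Finset.sum_congr rfl fun i _ => Finset.sum_congr rfl fun j _ => hPterm i j
    · exact Finset.sum_congr rfl fun i _ => by rw [hHterm i]
end

section
/- Conversely, every feasible solution (x, y) of the standard lot-sizing system with Σ_j Σ_{k≤t} x^{ij}_k ≥ d^i_{1t} admits a disaggregation into facility-location variables: there exist X^{ij}_{tk} ≥ 0 (t ≤ k) with Σ_{k≥t} X^{ij}_{tk} ≤ x^{ij}_t for all i,j,t, Σ_j Σ_{t≤k} X^{ij}_{tk} = d^i_k for all i,k, and X^{ij}_{tk} ≤ d^i_k y^j_t whenever x^{ij}_t ≤ M y^j_t with y binary. -/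
open Finset

/-- clamp identity: positive part of overlap of `[a,b]` and `[p,q]`. -/
lemma clamp_overlap (a b p q : ℝ) (hab : a ≤ b) (hpq : p ≤ q) :
    max 0 (min b q - max a p) = min b (max a q) - min b (max a p) := by
  rcases le_total b q with h1 | h1 <;> rcases le_total a p with h2 | h2 <;>
    rcases le_total a q with h3 | h3 <;> rcases le_total b p with h4 | h4 <;>
    simp [min_def, max_def] <;> split_ifs <;> linarith

/-- cumulative sums of `f : Fin N → ℝ` -/
noncomputable def cum {N : ℕ} (f : Fin N → ℝ) (n : ℕ) : ℝ :=
  ∑ k ∈ Finset.univ.filter (fun k : Fin N => (k : ℕ) < n), f k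

lemma cum_zero {N : ℕ} (f : Fin N → ℝ) : cum f 0 = 0 := by simp [cum]

lemma cum_top {N : ℕ} (f : Fin N → ℝ) : cum f N = ∑ k, f k := by
  unfold cum
  rw [Finset.filter_true_of_mem]
  intro k _; exact k.isLt

lemma cum_succ {N : ℕ} (f : Fin N → ℝ) (v : Fin N) :
    cum f (v.val + 1) = cum f v.val + f v := by
  unfold cum
  have h : Finset.univ.filter (fun k : Fin N => (k : ℕ) < v.val + 1)
      = insert v (Finset.univ.filter (fun k : Fin N => (k : ℕ) < v.val)) := by
    ext u
    simp [Nat.lt_succ_iff, le_iff_lt_or_eq, Fin.ext_iff, or_comm]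
  rw [h, Finset.sum_insert (by simp)]
  ring

lemma cum_mono {N : ℕ} (f : Fin N → ℝ) (hf : ∀ k, 0 ≤ f k) {m n : ℕ} (h : m ≤ n) :
    cum f m ≤ cum f n := by
  apply Finset.sum_le_sum_of_subset_of_nonneg
  · intro u; simp only [Finset.mem_filter, Finset.mem_univ, true_and]
    omega
  · intro u _ _; exact hf u

lemma cum_nonneg {N : ℕ} (f : Fin N → ℝ) (hf : ∀ k, 0 ≤ f k) (n : ℕ) :
    0 ≤ cum f n := by
  rw [← cum_zero f]; exact cum_mono f hf (Nat.zero_le n)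

lemma cum_Iio {N : ℕ} (f : Fin N → ℝ) (v : Fin N) :
    cum f v.val = ∑ k ∈ Finset.Iio v, f k := by
  unfold cum; congr 1; ext u; simp only [Finset.mem_filter, Finset.mem_univ, true_and, Finset.mem_Iio, Fin.lt_def]

lemma cum_Iic {N : ℕ} (f : Fin N → ℝ) (v : Fin N) :
    cum f (v.val + 1) = ∑ k ∈ Finset.Iic v, f k := by
  unfold cum; congr 1; ext u; simp only [Finset.mem_filter, Finset.mem_univ, true_and, Finset.mem_Iic, Fin.le_def, Nat.lt_succ_iff]

lemma tele {N : ℕ} (g : ℕ → ℝ) :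
    ∑ u : Fin N, (g (u.val + 1) - g u.val) = g N - g 0 := by
  rw [Fin.sum_univ_eq_sum_range (fun n => g (n + 1) - g n)]
  exact Finset.sum_range_sub g N

/-- Every feasible solution `(x, y)` of the standard lot-sizing
system admits a disaggregation into facility-location variables `X^{ij}_{tk} ≥ 0`
(supported on `t ≤ k`) with `∑_{k≥t} X^{ij}_{tk} ≤ x^{ij}_t`,
`∑_j ∑_{t≤k} X^{ij}_{tk} = d^i_k`, and `X^{ij}_{tk} ≤ d^i_k y^j_t`. -/
theorem standard_disaggregates_to_facility_location
    (NI NJ NT : ℕ)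
    (d : Fin NI → Fin NT → ℝ) (hd : ∀ i k, 0 ≤ d i k)
    (M : ℝ) (hM : ∀ i, (∑ k, d i k) ≤ M)
    (x : Fin NI → Fin NJ → Fin NT → ℝ) (y : Fin NJ → Fin NT → ℝ)
    (hy : ∀ j t, y j t = 0 ∨ y j t = 1)
    (hx : ∀ i j t, 0 ≤ x i j t)
    (hxy : ∀ i j t, x i j t ≤ M * y j t)
    (hdem : ∀ i t, (∑ k ∈ Finset.Iic t, d i k) ≤ ∑ j, ∑ k ∈ Finset.Iic t, x i j k) :
    ∃ X : Fin NI → Fin NJ → Fin NT → Fin NT → ℝ,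
      (∀ i j t k, 0 ≤ X i j t k) ∧
      (∀ i j t k, k < t → X i j t k = 0) ∧
      (∀ i j t, (∑ k ∈ Finset.Ici t, X i j t k) ≤ x i j t) ∧
      (∀ i k, (∑ j, ∑ t ∈ Finset.Iic k, X i j t k) = d i k) ∧
      (∀ i j t k, t ≤ k → X i j t k ≤ d i k * y j t) := by
  classical
  -- cumulative demand
  set D : Fin NI → ℕ → ℝ := fun i n => cum (d i) n with hDdef
  -- cumulative supply over full periods (all machines)
  set C : Fin NI → ℕ → ℝ := fun i n => cum (fun t => ∑ j, x i j t) n with hCdef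
  -- start of the supply interval of pair (j, t) in lex order (t first)
  set a : Fin NI → Fin NJ → Fin NT → ℝ :=
    fun i j t => C i t.val + cum (fun j' => x i j' t) j.val with hadef
  set X : Fin NI → Fin NJ → Fin NT → Fin NT → ℝ :=
    fun i j t k =>
      max 0 (min (a i j t + x i j t) (D i (k.val + 1)) - max (a i j t) (D i k.val))
    with hXdef
  -- basic facts
  have hDmono : ∀ i, ∀ {m n : ℕ}, m ≤ n → D i m ≤ D i n :=
    fun i {_ _} h => cum_mono _ (hd i) h
  have hDnonneg : ∀ i n, 0 ≤ D i n := fun i n => cum_nonneg _ (hd i) n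
  have hanonneg : ∀ i j t, 0 ≤ a i j t := by
    intro i j t
    have h1 : (0:ℝ) ≤ C i t.val := cum_nonneg _ (fun t => Finset.sum_nonneg fun j _ => hx i j t) _
    have h2 : (0:ℝ) ≤ cum (fun j' => x i j' t) j.val := cum_nonneg _ (fun j' => hx i j' t) _
    positivity
  have hab : ∀ i j t, a i j t ≤ a i j t + x i j t := fun i j t => by
    have := hx i j t; linarith
  -- the demand served by time k fits in the supply available through period n ≥ k+1
  have hDC : ∀ i (k : Fin NT) (n : ℕ), k.val + 1 ≤ n → D i (k.val + 1) ≤ C i n := by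
    intro i k n hn
    have h1 : D i (k.val + 1) ≤ ∑ j, ∑ k' ∈ Finset.Iic k, x i j k' := by
      rw [hDdef]; dsimp only; rw [cum_Iic]; exact hdem i k
    have h2 : (∑ j, ∑ k' ∈ Finset.Iic k, x i j k') = C i (k.val + 1) := by
      rw [hCdef]; dsimp only; rw [cum_Iic]; exact Finset.sum_comm
    calc D i (k.val+1) ≤ C i (k.val+1) := by rw [← h2]; exact h1
      _ ≤ C i n := cum_mono _ (fun t => Finset.sum_nonneg fun j _ => hx i j t) hn
  -- support: nothing served before the purchase period
  have hsupp : ∀ i j t k, (k : Fin NT) < t → X i j t k = 0 := by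
    intro i j t k hkt
    have h1 : D i (k.val + 1) ≤ a i j t := by
      have : D i (k.val + 1) ≤ C i t.val := hDC i k t.val (by exact hkt)
      have h2 : (0:ℝ) ≤ cum (fun j' => x i j' t) j.val := cum_nonneg _ (fun j' => hx i j' t) _
      rw [hadef]; dsimp only; linarith
    rw [hXdef]; dsimp only
    apply max_eq_left
    have := le_max_left (a i j t) (D i k.val)
    have := min_le_right (a i j t + x i j t) (D i (k.val + 1))
    linarith
  have hDsucc : ∀ i (k : Fin NT), D i (k.val + 1) = D i k.val + d i k := by
    intro i k; rw [hDdef]; dsimp only; exact cum_succ (d i) k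
  have hCsucc : ∀ i (t : Fin NT), C i (t.val + 1) = C i t.val + ∑ j, x i j t := by
    intro i t; rw [hCdef]; dsimp only; exact cum_succ _ t
  refine ⟨X, ?_, hsupp, ?_, ?_, ?_⟩
  · intro i j t k; exact le_max_left _ _
  · -- row sum: ∑_{k ≥ t} X ≤ x
    intro i j t
    set g : ℕ → ℝ := fun n => min (a i j t + x i j t) (max (a i j t) (D i n)) with hg
    have hstep : ∀ k : Fin NT, X i j t k = g (k.val + 1) - g k.val := by
      intro k
      rw [hXdef]
      exact clamp_overlap _ _ _ _ (hab i j t) (hDmono i (Nat.le_succ _))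
    have h1 : ∑ k ∈ Finset.Ici t, X i j t k ≤ ∑ k, X i j t k :=
      Finset.sum_le_sum_of_subset_of_nonneg (Finset.subset_univ _)
        (fun k _ _ => le_max_left _ _)
    have h2 : ∑ k, X i j t k = g NT - g 0 := by
      rw [Finset.sum_congr rfl fun k _ => hstep k]
      exact tele g
    have hg0 : g 0 = a i j t := by
      rw [hg]; dsimp only
      rw [hDdef]; dsimp only; rw [cum_zero]
      rw [max_eq_left (hanonneg i j t), min_eq_right (hab i j t)]
    have hgN : g NT ≤ a i j t + x i j t := min_le_left _ _
    linarith
  · -- column sum: ∑_j ∑_{t ≤ k} X = d i k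
    intro i k
    have hpq : D i k.val ≤ D i (k.val + 1) := hDmono i (Nat.le_succ _)
    set h : ℝ → ℝ := fun z => min (D i (k.val + 1)) (max (D i k.val) z) with hh
    have hext : ∀ j, ∑ t ∈ Finset.Iic k, X i j t k = ∑ t, X i j t k := by
      intro j
      exact Finset.sum_subset (Finset.subset_univ _)
        (fun t _ ht => hsupp i j t k (by simpa using ht))
    have hstep : ∀ j t, X i j t k = h (a i j t + x i j t) - h (a i j t) := by
      intro j t
      rw [hXdef, hh]; dsimp only
      rw [min_comm (a i j t + x i j t) (D i (k.val + 1)),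
        max_comm (a i j t) (D i k.val)]
      exact clamp_overlap _ _ _ _ hpq (hab i j t)
    have hrow : ∀ t : Fin NT, ∑ j, X i j t k = h (C i (t.val + 1)) - h (C i t.val) := by
      intro t
      set g2 : ℕ → ℝ := fun m => h (C i t.val + cum (fun j' => x i j' t) m) with hg2
      have hj : ∀ j : Fin NJ, X i j t k = g2 (j.val + 1) - g2 j.val := by
        intro j
        rw [hstep j t, hg2]; dsimp only
        rw [cum_succ]
        rw [hadef]; dsimp only
        rw [← add_assoc]
      rw [Finset.sum_congr rfl fun j _ => hj j, tele g2]
      rw [hg2]; dsimp only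
      rw [cum_zero, cum_top, add_zero, hCsucc i t]
    calc ∑ j, ∑ t ∈ Finset.Iic k, X i j t k
        = ∑ j, ∑ t, X i j t k := by rw [Finset.sum_congr rfl fun j _ => hext j]
      _ = ∑ t, ∑ j, X i j t k := Finset.sum_comm
      _ = ∑ t : Fin NT, (h (C i (t.val + 1)) - h (C i t.val)) := by
          rw [Finset.sum_congr rfl fun t _ => hrow t]
      _ = h (C i NT) - h (C i 0) := tele (fun n => h (C i n))
      _ = d i k := by
          have hC0 : C i 0 = 0 := by rw [hCdef]; dsimp only; exact cum_zero _
          have hqC : D i (k.val + 1) ≤ C i NT := hDC i k NT k.isLt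
          have hCN : h (C i NT) = D i (k.val + 1) := by
            rw [hh]; dsimp only
            exact min_eq_left (le_trans hqC (le_max_right _ _))
          have hC0' : h (C i 0) = D i k.val := by
            rw [hC0, hh]; dsimp only
            rw [max_eq_left (hDnonneg i _)]
            exact min_eq_right hpq
          rw [hCN, hC0']
          have := hDsucc i k
          linarith
  · -- bound by d * y
    intro i j t k htk
    rcases hy j t with h0 | h1
    · have hx0 : x i j t = 0 := le_antisymm (by have := hxy i j t; rw [h0] at this; linarith) (hx i j t)
      rw [h0, mul_zero]
      rw [hXdef]; dsimp only
      apply max_le le_rfl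
      have h2 : min (a i j t + x i j t) (D i (k.val + 1)) ≤ a i j t := by
        have h5 := min_le_left (a i j t + x i j t) (D i (k.val + 1))
        linarith
      have h3 := le_max_left (a i j t) (D i k.val)
      linarith
    · rw [h1, mul_one]
      rw [hXdef]; dsimp only
      apply max_le (hd i k)
      have h2 := min_le_right (a i j t + x i j t) (D i (k.val + 1))
      have h3 := le_max_right (a i j t) (D i k.val)
      have h4 := hDsucc i k
      linarith
end

section
/- Adding the (l,S_j)-inequalities to the standard LP relaxation gives a relaxation at least as strong as the facility location LP relaxation on the projected variables: if (x, y) with 0 ≤ y ≤ 1, x ≥ 0 satisfies all (l,S_j)-inequalities Σ_j ( Σ_{u∈L∖S_j} x^{ij}_u + Σ_{u∈S_j} y^j_u d^i_{ul} ) ≥ d^i_{1l} for every item i, every l, and every choice of S_j ⊆ {1,...,l}, and additionally Σ_j Σ_t x^{ij}_t = d^i_{1,NT} for each i, then there exists X ≥ 0 with Σ_{k≥t} X^{ij}_{tk} = x^{ij}_t, Σ_j Σ_{t≤k} X^{ij}_{tk} = d^i_k, and X^{ij}_{tk} ≤ d^i_k y^j_t (i.e., (x,y) lies in the projection of the facility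 location LP relaxation). -/
/-!
For a fixed item the required `X` is a feasible flow of a transportation problem: the sources are
the pairs `(j, t)` with supply `x^j_t`, the sinks are the periods `k` with demand `d_k`, and the arc
`(j, t) → k` exists for `t ≤ k` with capacity `d_k y^j_t`. By Gale's supply–demand theorem such a
flow exists once total supply equals total demand and every cut `(R, L)` satisfies
`d(L) ≤ x(R) + c(Rᶜ, L)`: in a flow of maximal value, the sources and sinks that reach a deficient
sink in the residual graph would form a violated cut.

For a cut `(R, L)` the capacity from `Rᶜ` into period `k` is `d_k Y_k`, where
`Y_k = ∑_{(j,t) ∉ R, t ≤ k} y^j_t` is nondecreasing in `k`. Hence it suffices to check the cut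
condition for `L = {k ≤ l}` with `l` the last period where `Y_l < 1`, and there it is the
`(l,S_j)`-inequality with `S_j = {u ≤ l | (j, u) ∉ R}`.
-/

open Finset

namespace Transport

open Filter Topology

variable {P K : Type*}

def ResidualArc (c X : P → K → ℝ) : P ⊕ K → P ⊕ K → Prop
  | .inl p, .inr k => X p k < c p k
  | .inr k, .inl p => 0 < X p k
  | _, _ => False

def IsResidualDirection (c X D : P → K → ℝ) : Prop :=
  ∀ p k, (0 < D p k → X p k < c p k) ∧ (D p k < 0 → 0 < X p k)

lemma IsResidualDirection.add {c X D D' : P → K → ℝ} (hD : IsResidualDirection c X D)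
    (hD' : IsResidualDirection c X D') : IsResidualDirection c X (D + D') := fun p k => by
  simp only [Pi.add_apply]
  refine ⟨fun hpos => ?_, fun hneg => ?_⟩
  · rcases lt_or_ge 0 (D p k) with h | h
    exacts [(hD p k).1 h, (hD' p k).1 (by linarith)]
  · rcases lt_or_ge (D p k) 0 with h | h
    exacts [(hD p k).2 h, (hD' p k).2 (by linarith)]

lemma isResidualDirection_single [DecidableEq P] [DecidableEq K] {c X : P → K → ℝ} {p : P} {k : K}
    (h : X p k < c p k) : IsResidualDirection c X (Pi.single p (Pi.single k 1)) := by
  intro q l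
  by_cases hq : q = p <;> by_cases hl : l = k <;> subst_vars <;> simp [*]

lemma isResidualDirection_neg_single [DecidableEq P] [DecidableEq K] {c X : P → K → ℝ} {p : P}
    {k : K} (h : 0 < X p k) : IsResidualDirection c X (-Pi.single p (Pi.single k 1)) := by
  intro q l
  by_cases hq : q = p <;> by_cases hl : l = k <;> subst_vars <;> simp [*]

variable [Fintype P] [Fintype K]

lemma exists_isResidualDirection_of_reflTransGen [DecidableEq P] [DecidableEq K]
    {c X : P → K → ℝ} {n : P ⊕ K} {k₀ : K}
    (h : Relation.ReflTransGen (ResidualArc c X) n (.inr k₀)) :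
    ∃ D, IsResidualDirection c X D ∧
      (∀ p, ∑ k, D p k = if n = .inl p then 1 else 0) ∧
      (∀ k, ∑ p, D p k = (if k₀ = k then 1 else 0) - if n = .inr k then 1 else 0) := by
  induction h using Relation.ReflTransGen.head_induction_on with
  | refl => exact ⟨0, fun p k => by simp, fun p => by simp, fun k => by simp⟩
  | @head a b hab _ ih =>
    obtain ⟨D, hD, hrow, hcol⟩ := ih
    rcases a with p | k <;> rcases b with p' | k'
    · exact hab.elim
    · refine ⟨D + Pi.single p (Pi.single k' 1), hD.add (isResidualDirection_single hab),
        fun q => ?_, fun k => ?_⟩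
      · simp [sum_add_distrib, hrow, Pi.single_apply, ite_apply, eq_comm]
      · simp [sum_add_distrib, hcol, Pi.single_apply, ite_apply, eq_comm]
    · refine ⟨D + -Pi.single p' (Pi.single k 1), hD.add (isResidualDirection_neg_single hab),
        fun q => ?_, fun l => ?_⟩
      · simp [sum_add_distrib, hrow, Pi.single_apply, ite_apply, eq_comm]
      · simp [sum_add_distrib, hcol, Pi.single_apply, ite_apply, eq_comm, sub_eq_add_neg]
    · exact hab.elim

lemma eventually_nonneg_add_mul {a b : ℝ} (ha : 0 ≤ a) (hb : b < 0 → 0 < a) :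
    ∀ᶠ ε in 𝓝[>] 0, 0 ≤ a + ε * b := by
  rcases ha.eq_or_lt with rfl | ha
  · have hb : 0 ≤ b := not_lt.1 fun h => (hb h).false
    filter_upwards [self_mem_nhdsWithin] with ε hε
    simpa using mul_nonneg (le_of_lt hε) hb
  · have hcont : Continuous fun ε : ℝ => a + ε * b := by fun_prop
    have hlim := (hcont.tendsto' 0 a (by simp)).mono_left (nhdsWithin_le_nhds (s := Set.Ioi 0))
    exact (hlim.eventually_const_lt ha).mono fun _ h => h.le

lemma IsResidualDirection.eventually_mem_box {c X D : P → K → ℝ}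
    (hD : IsResidualDirection c X D) (h0 : ∀ p k, 0 ≤ X p k) (hc : ∀ p k, X p k ≤ c p k) :
    ∀ᶠ ε in 𝓝[>] 0, ∀ p k, 0 ≤ X p k + ε * D p k ∧ X p k + ε * D p k ≤ c p k := by
  refine eventually_all.2 fun p => eventually_all.2 fun k => ?_
  have hup := eventually_nonneg_add_mul (sub_nonneg.2 (hc p k)) fun h =>
    sub_pos.2 ((hD p k).1 (neg_neg_iff_pos.1 h))
  filter_upwards [eventually_nonneg_add_mul (h0 p k) (hD p k).2, hup] with ε hlo hhi
  exact ⟨hlo, by linarith⟩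

variable (a : P → ℝ) (b : K → ℝ) (c : P → K → ℝ)

def partialTransports : Set (P → K → ℝ) :=
  {X | (∀ p k, 0 ≤ X p k) ∧ (∀ p k, X p k ≤ c p k) ∧
    (∀ p, ∑ k, X p k ≤ a p) ∧ (∀ k, ∑ p, X p k ≤ b k)}

lemma isCompact_partialTransports : IsCompact (partialTransports a b c) := by
  refine isCompact_Icc.of_isClosed_subset ?_ fun X hX => ⟨hX.1, hX.2.1⟩
  simp only [partialTransports, Set.ofPred_and, Set.ofPred_forall]
  refine .inter (isClosed_iInter fun p => isClosed_iInter fun k => ?_) <| .inter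
    (isClosed_iInter fun p => isClosed_iInter fun k => ?_) <| .inter
    (isClosed_iInter fun p => ?_) (isClosed_iInter fun k => ?_) <;>
  exact isClosed_le (by fun_prop) (by fun_prop)

variable {a b c}

/-- Otherwise pushing a little flow along a residual path from `p` to `k₀` would increase the
flow value. -/
lemma rowSum_eq_of_isMaxOn {X : P → K → ℝ} (hX : X ∈ partialTransports a b c)
    (hmax : IsMaxOn (fun X => ∑ p, ∑ k, X p k) (partialTransports a b c) X) {p : P} {k₀ : K}
    (hk₀ : ∑ q, X q k₀ < b k₀)
    (hp : Relation.ReflTransGen (ResidualArc c X) (.inl p) (.inr k₀)) :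
    ∑ k, X p k = a p := by
  classical
  obtain ⟨hX0, hXc, hXrow, hXcol⟩ := hX
  by_contra hne
  have hslack : ∑ k, X p k < a p := (hXrow p).lt_of_ne hne
  obtain ⟨D, hD, hrow, hcol⟩ := exists_isResidualDirection_of_reflTransGen hp
  have hrowε := eventually_nonneg_add_mul (b := -1) (sub_pos.2 hslack).le fun _ => sub_pos.2 hslack
  have hcolε := eventually_nonneg_add_mul (b := -1) (sub_pos.2 hk₀).le fun _ => sub_pos.2 hk₀
  obtain ⟨ε, ⟨hbox, hrowε, hcolε⟩, hε⟩ := (((hD.eventually_mem_box hX0 hXc).and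
    (hrowε.and hcolε)).and self_mem_nhdsWithin).exists
  set X' : P → K → ℝ := fun q k => X q k + ε * D q k
  have hrow' : ∀ q, ∑ k, X' q k = ∑ k, X q k + ε * if p = q then 1 else 0 := fun q => by
    simp [X', sum_add_distrib, ← mul_sum, hrow]
  have hcol' : ∀ k, ∑ q, X' q k = ∑ q, X q k + ε * if k₀ = k then 1 else 0 := fun k => by
    simp [X', sum_add_distrib, ← mul_sum, hcol]
  have hX' : X' ∈ partialTransports a b c := by
    refine ⟨fun q k => (hbox q k).1, fun q k => (hbox q k).2, fun q => ?_, fun k => ?_⟩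
    · rw [hrow']
      split_ifs with h
      · subst h; linarith
      · simpa using hXrow q
    · rw [hcol']
      split_ifs with h
      · subst h; linarith
      · simpa using hXcol k
  have htotal : ∑ q, ∑ k, X' q k = ∑ q, ∑ k, X q k + ε := by
    simp [hrow', sum_add_distrib]
  have hle : ∑ q, ∑ k, X' q k ≤ ∑ q, ∑ k, X q k := hmax hX'
  linarith

lemma sum_colSum_eq_of_cut [DecidableEq P] {X : P → K → ℝ} {R : Finset P} {L : Finset K}
    (hrow : ∀ p ∈ R, ∑ k, X p k = a p) (hzero : ∀ p ∈ R, ∀ k ∉ L, X p k = 0)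
    (hfull : ∀ p ∉ R, ∀ k ∈ L, X p k = c p k) :
    ∑ k ∈ L, ∑ p, X p k = ∑ p ∈ R, a p + ∑ p ∈ Rᶜ, ∑ k ∈ L, c p k := by
  rw [sum_comm, ← sum_add_sum_compl R]
  congr 1
  · refine sum_congr rfl fun p hp => ?_
    rw [← hrow p hp]
    exact sum_subset (subset_univ _) fun k _ hk => hzero p hp k hk
  · exact sum_congr rfl fun p hp => sum_congr rfl fun k hk => hfull p (mem_compl.1 hp) k hk

lemma colSum_eq_of_isMaxOn [DecidableEq P]
    (hcut : ∀ (R : Finset P) (L : Finset K),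
      ∑ k ∈ L, b k ≤ ∑ p ∈ R, a p + ∑ p ∈ Rᶜ, ∑ k ∈ L, c p k)
    {X : P → K → ℝ} (hX : X ∈ partialTransports a b c)
    (hmax : IsMaxOn (fun X => ∑ p, ∑ k, X p k) (partialTransports a b c) X) (k₀ : K) :
    ∑ p, X p k₀ = b k₀ := by
  classical
  by_contra hne
  have hk₀ : ∑ p, X p k₀ < b k₀ := (hX.2.2.2 k₀).lt_of_ne hne
  let reaches (n : P ⊕ K) : Prop := Relation.ReflTransGen (ResidualArc c X) n (.inr k₀)
  let R : Finset P := {p | reaches (.inl p)}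
  let L : Finset K := {k | reaches (.inr k)}
  have hzero : ∀ p ∈ R, ∀ k ∉ L, X p k = 0 := by
    intro p hp k hk
    by_contra h
    have hpos : 0 < X p k := (hX.1 p k).lt_of_ne' h
    exact hk (mem_filter.2 ⟨mem_univ _, .head (show ResidualArc c X (.inr k) (.inl p) from hpos)
      (mem_filter.1 hp).2⟩)
  have hfull : ∀ p ∉ R, ∀ k ∈ L, X p k = c p k := by
    intro p hp k hk
    by_contra h
    have hlt : X p k < c p k := (hX.2.1 p k).lt_of_ne h
    exact hp (mem_filter.2 ⟨mem_univ _, .head (show ResidualArc c X (.inl p) (.inr k) from hlt)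
      (mem_filter.1 hk).2⟩)
  have hflow := sum_colSum_eq_of_cut
    (fun p hp => rowSum_eq_of_isMaxOn hX hmax hk₀ (mem_filter.1 hp).2) hzero hfull
  have hlt : ∑ k ∈ L, ∑ p, X p k < ∑ k ∈ L, b k :=
    sum_lt_sum (fun k _ => hX.2.2.2 k) ⟨k₀, mem_filter.2 ⟨mem_univ _, .refl⟩, hk₀⟩
  linarith [hcut R L]

theorem exists_transport_of_forall_cut [DecidableEq P] (hb : ∀ k, 0 ≤ b k)
    (hc : ∀ p k, 0 ≤ c p k) (htot : ∑ p, a p = ∑ k, b k)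
    (hcut : ∀ (R : Finset P) (L : Finset K),
      ∑ k ∈ L, b k ≤ ∑ p ∈ R, a p + ∑ p ∈ Rᶜ, ∑ k ∈ L, c p k) :
    ∃ X : P → K → ℝ, (∀ p k, 0 ≤ X p k) ∧ (∀ p k, X p k ≤ c p k) ∧
      (∀ p, ∑ k, X p k = a p) ∧ (∀ k, ∑ p, X p k = b k) := by
  have ha : ∀ p, 0 ≤ a p := fun p => by simpa using hcut {p} ∅
  have h0 : (0 : P → K → ℝ) ∈ partialTransports a b c :=
    ⟨fun _ _ => le_rfl, hc, by simpa using ha, by simpa using hb⟩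
  obtain ⟨X, hX, hmax⟩ :=
    (isCompact_partialTransports a b c).exists_isMaxOn ⟨0, h0⟩
      (f := fun X => ∑ p, ∑ k, X p k) (by fun_prop)
  have hcol := colSum_eq_of_isMaxOn hcut hX hmax
  have hrow : ∀ p, ∑ k, X p k = a p := by
    refine fun p => (sum_eq_sum_iff_of_le fun q _ => hX.2.2.1 q).1 ?_ p (mem_univ p)
    rw [sum_comm, htot]
    exact sum_congr rfl fun k _ => hcol k
  exact ⟨X, hX.1, hX.2.1, hrow, hcol⟩

end Transport

lemma sum_mul_le_of_forall_sum_Iic_le {α : Type*} [LinearOrder α] [Fintype α]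
    [LocallyFiniteOrderBot α] {d h : α → ℝ} {B : ℝ} (hd : ∀ k, 0 ≤ d k) (hh : Antitone h)
    (hB : 0 ≤ B) (hIic : ∀ l, ∑ k ∈ Iic l, d k * h k ≤ B) (L : Finset α) :
    ∑ k ∈ L, d k * h k ≤ B := by
  classical
  let T : Finset α := {k | 0 < h k}
  have hLT : ∑ k ∈ L, d k * h k ≤ ∑ k ∈ T, d k * h k := calc
    _ ≤ ∑ k ∈ L ∩ T, d k * h k := sum_le_sum_of_subset_of_nonpos' inter_subset_left
          fun k hkL hk => mul_nonpos_of_nonneg_of_nonpos (hd k)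
            (not_lt.1 fun hpos => hk (mem_inter.2 ⟨hkL, by simpa [T] using hpos⟩))
    _ ≤ ∑ k ∈ T, d k * h k := sum_le_sum_of_subset_of_nonneg inter_subset_right
          fun k hk _ => mul_nonneg (hd k) (mem_filter.1 hk).2.le
  rcases T.eq_empty_or_nonempty with hT | hT
  · rw [hT, sum_empty] at hLT
    exact hLT.trans hB
  · have hTIic : T = Iic (T.max' hT) := by
      ext k
      refine ⟨fun hk => mem_Iic.2 (T.le_max' k hk), fun hk => mem_filter.2 ⟨mem_univ _, ?_⟩⟩
      exact (mem_filter.1 (T.max'_mem hT)).2.trans_le (hh (mem_Iic.1 hk))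
    exact hLT.trans (hTIic ▸ hIic _)

section LotSizing

variable {J T : Type*} [LinearOrder T]

def flCapacity (d : T → ℝ) (y : J → T → ℝ) (p : J × T) (k : T) : ℝ :=
  if p.2 ≤ k then d k * y p.1 p.2 else 0

def cumulativeSetup (y : J → T → ℝ) (Q : Finset (J × T)) (k : T) : ℝ :=
  ∑ p ∈ Q, if p.2 ≤ k then y p.1 p.2 else 0

lemma monotone_cumulativeSetup {y : J → T → ℝ} (hy : ∀ j t, 0 ≤ y j t) (Q : Finset (J × T)) :
    Monotone (cumulativeSetup y Q) := fun k k' hkk' =>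
  sum_le_sum fun p _ => by
    split_ifs with h h' <;> first | exact le_rfl | exact hy _ _ | exact absurd (h.trans hkk') h'

lemma flCapacity_nonneg {d : T → ℝ} {y : J → T → ℝ} (hd : ∀ k, 0 ≤ d k)
    (hy : ∀ j t, 0 ≤ y j t) (p : J × T) (k : T) : 0 ≤ flCapacity d y p k := by
  unfold flCapacity
  split_ifs
  exacts [mul_nonneg (hd k) (hy _ _), le_rfl]

lemma sum_flCapacity_eq_mul_cumulativeSetup (d : T → ℝ) (y : J → T → ℝ) (Q : Finset (J × T))
    (k : T) : ∑ p ∈ Q, flCapacity d y p k = d k * cumulativeSetup y Q k := by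
  simp only [flCapacity, cumulativeSetup, mul_sum, mul_ite, mul_zero]

variable [LocallyFiniteOrder T] [LocallyFiniteOrderBot T]

lemma sum_Iic_ite_le_eq_sum_Icc (d : T → ℝ) (u l : T) :
    ∑ k ∈ Iic l, (if u ≤ k then d k else 0) = ∑ k ∈ Icc u l, d k := by
  rw [← sum_filter]
  congr 1
  ext k
  simp [and_comm]

lemma sum_Iic_mul_cumulativeSetup (d : T → ℝ) (y : J → T → ℝ) (Q : Finset (J × T)) (l : T) :
    ∑ k ∈ Iic l, d k * cumulativeSetup y Q k =
      ∑ p ∈ Q, y p.1 p.2 * ∑ k ∈ Icc p.2 l, d k := by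
  simp only [cumulativeSetup, mul_sum, ← sum_Iic_ite_le_eq_sum_Icc]
  rw [sum_comm]
  refine sum_congr rfl fun p _ => sum_congr rfl fun k _ => ?_
  split_ifs <;> ring

variable [Fintype J] [Fintype T]

def SatisfiesLSjInequalities (d : T → ℝ) (x y : J → T → ℝ) : Prop :=
  ∀ (l : T) (S : J → Finset T), (∀ j, S j ⊆ Iic l) →
    ∑ k ∈ Iic l, d k ≤
      ∑ j, ((∑ u ∈ Iic l \ S j, x j u) + ∑ u ∈ S j, y j u * ∑ k ∈ Icc u l, d k)

lemma sum_Iic_mul_one_sub_cumulativeSetup_le [DecidableEq J] {d : T → ℝ} {x y : J → T → ℝ}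
    (hx : ∀ j t, 0 ≤ x j t) (hlSj : SatisfiesLSjInequalities d x y) (R : Finset (J × T)) (l : T) :
    ∑ k ∈ Iic l, d k * (1 - cumulativeSetup y Rᶜ k) ≤ ∑ p ∈ R, x p.1 p.2 := by
  let S (j : J) : Finset T := {u | (j, u) ∉ R ∧ u ≤ l}
  have h := hlSj l S fun j u hu => mem_Iic.2 (mem_filter.1 hu).2.2
  have hxR : ∑ j, ∑ u ∈ Iic l \ S j, x j u ≤ ∑ p ∈ R, x p.1 p.2 := by
    rw [← filter_univ_mem R, sum_filter, Fintype.sum_prod_type]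
    gcongr with j
    rw [← sum_filter]
    exact sum_le_sum_of_subset_of_nonneg (fun u hu => by
      simp only [S, mem_sdiff, mem_Iic, mem_filter, mem_univ, true_and] at hu ⊢
      tauto) fun u _ _ => hx j u
  have hyR : ∑ j, ∑ u ∈ S j, y j u * ∑ k ∈ Icc u l, d k =
      ∑ k ∈ Iic l, d k * cumulativeSetup y Rᶜ k := by
    rw [sum_Iic_mul_cumulativeSetup, ← filter_univ_mem Rᶜ, sum_filter, Fintype.sum_prod_type]
    refine sum_congr rfl fun j _ => ?_
    rw [sum_filter]
    refine sum_congr rfl fun u _ => ?_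
    by_cases hul : u ≤ l
    · simp [hul]
    · simp [hul, Icc_eq_empty hul]
  rw [sum_add_distrib] at h
  simp only [mul_sub, mul_one, sum_sub_distrib]
  linarith

lemma cut_condition_of_satisfiesLSjInequalities [DecidableEq J] {d : T → ℝ} {x y : J → T → ℝ}
    (hd : ∀ k, 0 ≤ d k) (hx : ∀ j t, 0 ≤ x j t) (hy : ∀ j t, 0 ≤ y j t)
    (hlSj : SatisfiesLSjInequalities d x y) (R : Finset (J × T)) (L : Finset T) :
    ∑ k ∈ L, d k ≤ ∑ p ∈ R, x p.1 p.2 + ∑ p ∈ Rᶜ, ∑ k ∈ L, flCapacity d y p k := by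
  have h := sum_mul_le_of_forall_sum_Iic_le hd
    (fun k k' hkk' => sub_le_sub_left (monotone_cumulativeSetup hy Rᶜ hkk') 1)
    (sum_nonneg fun p _ => hx p.1 p.2) (sum_Iic_mul_one_sub_cumulativeSetup_le hx hlSj R) L
  rw [sum_comm]
  simp only [sum_flCapacity_eq_mul_cumulativeSetup, mul_sub, mul_one, sum_sub_distrib] at h ⊢
  linarith

theorem exists_flow_of_satisfiesLSjInequalities [LocallyFiniteOrderTop T] {d : T → ℝ}
    {x y : J → T → ℝ} (hd : ∀ k, 0 ≤ d k) (hx : ∀ j t, 0 ≤ x j t) (hy : ∀ j t, 0 ≤ y j t)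
    (hlSj : SatisfiesLSjInequalities d x y) (htot : ∑ j, ∑ t, x j t = ∑ k, d k) :
    ∃ X : J → T → T → ℝ, (∀ j t k, 0 ≤ X j t k) ∧ (∀ j t, ∑ k ∈ Ici t, X j t k = x j t) ∧
      (∀ k, ∑ j, ∑ t ∈ Iic k, X j t k = d k) ∧ (∀ j t k, t ≤ k → X j t k ≤ d k * y j t) := by
  classical
  obtain ⟨X, hX0, hXc, hrow, hcol⟩ := Transport.exists_transport_of_forall_cut
    (a := fun p : J × T => x p.1 p.2) (c := flCapacity d y) hd
    (flCapacity_nonneg hd hy)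
    (by rw [Fintype.sum_prod_type]; exact htot)
    (cut_condition_of_satisfiesLSjInequalities hd hx hy hlSj)
  have hvanish : ∀ j t k, ¬t ≤ k → X (j, t) k = 0 := fun j t k h =>
    le_antisymm (by simpa [flCapacity, h] using hXc (j, t) k) (hX0 _ _)
  refine ⟨fun j t k => X (j, t) k, fun j t k => hX0 _ _, fun j t => ?_, fun k => ?_,
    fun j t k h => by simpa [flCapacity, h] using hXc (j, t) k⟩
  · rw [← hrow (j, t)]
    exact sum_subset (subset_univ _) fun k _ hk => hvanish j t k (by simpa using hk)
  · rw [← hcol k, Fintype.sum_prod_type]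
    exact sum_congr rfl fun j _ =>
      sum_subset (subset_univ _) fun t _ ht => hvanish j t k (by simpa using ht)

end LotSizing

theorem lSj_inequalities_imply_fl_projection_general
    (NI NJ NT : ℕ)
    (d : Fin NI → Fin NT → ℝ) (hd : ∀ i k, 0 ≤ d i k)
    (x : Fin NI → Fin NJ → Fin NT → ℝ) (y : Fin NJ → Fin NT → ℝ)
    (hy0 : ∀ j t, 0 ≤ y j t)
    (hx : ∀ i j t, 0 ≤ x i j t)
    (hlSj : ∀ (i : Fin NI) (l : Fin NT) (S : Fin NJ → Finset (Fin NT)),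
      (∀ j, S j ⊆ Finset.Iic l) →
      (∑ k ∈ Finset.Iic l, d i k) ≤
        ∑ j, ((∑ u ∈ Finset.Iic l \ S j, x i j u) +
              ∑ u ∈ S j, y j u * ∑ k ∈ Finset.Icc u l, d i k))
    (htot : ∀ i, (∑ j, ∑ t, x i j t) = ∑ t, d i t) :
    ∃ X : Fin NI → Fin NJ → Fin NT → Fin NT → ℝ,
      (∀ i j t k, 0 ≤ X i j t k) ∧
      (∀ i j t, (∑ k ∈ Finset.Ici t, X i j t k) = x i j t) ∧
      (∀ i k, (∑ j, ∑ t ∈ Finset.Iic k, X i j t k) = d i k) ∧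
      (∀ i j t k, t ≤ k → X i j t k ≤ d i k * y j t) := by
  choose X hX0 hXx hXd hXy using fun i =>
    exists_flow_of_satisfiesLSjInequalities (hd i) (hx i) hy0 (hlSj i) (htot i)
  exact ⟨X, hX0, hXx, hXd, hXy⟩

/-- If a nonnegative point `(x, y)` with `0 ≤ y ≤ 1` satisfies all
`(l,S_j)`-inequalities and purchases exactly the total demand of each item, then it
lies in the projection of the facility location LP relaxation: there exists `X ≥ 0`
with `∑_{k≥t} X^{ij}_{tk} = x^{ij}_t`, `∑_j ∑_{t≤k} X^{ij}_{tk} = d^i_k` and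
`X^{ij}_{tk} ≤ d^i_k y^j_t`. -/
theorem lSj_inequalities_imply_fl_projection
    (NI NJ NT : ℕ)
    (d : Fin NI → Fin NT → ℝ) (hd : ∀ i k, 0 ≤ d i k)
    (x : Fin NI → Fin NJ → Fin NT → ℝ) (y : Fin NJ → Fin NT → ℝ)
    (hy0 : ∀ j t, 0 ≤ y j t) (hy1 : ∀ j t, y j t ≤ 1)
    (hx : ∀ i j t, 0 ≤ x i j t)
    (hlSj : ∀ (i : Fin NI) (l : Fin NT) (S : Fin NJ → Finset (Fin NT)),
      (∀ j, S j ⊆ Finset.Iic l) →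
      (∑ k ∈ Finset.Iic l, d i k) ≤
        ∑ j, ((∑ u ∈ Finset.Iic l \ S j, x i j u) +
              ∑ u ∈ S j, y j u * ∑ k ∈ Finset.Icc u l, d i k))
    (htot : ∀ i, (∑ j, ∑ t, x i j t) = ∑ t, d i t) :
    ∃ X : Fin NI → Fin NJ → Fin NT → Fin NT → ℝ,
      (∀ i j t k, 0 ≤ X i j t k) ∧
      (∀ i j t, (∑ k ∈ Finset.Ici t, X i j t k) = x i j t) ∧
      (∀ i k, (∑ j, ∑ t ∈ Finset.Iic k, X i j t k) = d i k) ∧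
      (∀ i j t k, t ≤ k → X i j t k ≤ d i k * y j t) :=
  lSj_inequalities_imply_fl_projection_general NI NJ NT d hd x y hy0 hx hlSj htot
end

section
/- Existence of zero-inventory-ordering (consecutive-coverage) optimal solutions: for the facility location formulation with time-independent nonnegative costs, there exists an optimal solution in which, for every item i and supplier j, the set of demand periods k served by a purchase at period t (i.e., {k ≥ t : X^{ij}_{tk} > 0}) is an interval of consecutive periods; equivalently, if X^{ij}_{tk} > 0 and X^{ij}_{tk''} > 0 with k < k'', then the demand d^i_{k'} of every intermediate period k' with t ≤ k < k' < k'' and d^i_{k'} > 0 is served (for item i, supplier j) entirely from periods ≥ the relevant purchase, so that one may choose an optimal extreme solution where X^{ij}_{tk'} = d^i_{k'} for intermediate k'. -/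
/-!
The feasible region is compact, so an optimal `(X, y)` exists. Keep `y` and send each demand
`d i k` entirely through its cheapest open arc `(j, t)` (`t ≤ k`, `y j t = 1`): this is feasible,
and no more expensive, because every arc carrying flow to period `k` is open.

The unit cost `P i j + (k - t) H i` is `P i j - t H i` plus a term depending only on `k`, so after a
fixed tie-break the cheapest arc for period `k` is the minimum of one key over the open arcs of `k`,
a set that grows with `k`. An arc that is cheapest for `k₁` and for `k₂ > k₁` is therefore cheapest,
and carries the whole demand, for every period in between.
-/

namespace ZIO

variable {NI NJ NT : ℕ}

/-- Feasibility for the facility location formulation. -/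
def FeasFL (d : Fin NI → Fin NT → ℝ)
    (X : Fin NI → Fin NJ → Fin NT → Fin NT → ℝ) (y : Fin NJ → Fin NT → ℝ) : Prop :=
  (∀ j t, y j t = 0 ∨ y j t = 1) ∧
  (∀ i j t k, 0 ≤ X i j t k) ∧
  (∀ i j (t k : Fin NT), ¬ t ≤ k → X i j t k = 0) ∧
  (∀ i k, (∑ j, ∑ t ∈ Finset.Iic k, X i j t k) = d i k) ∧
  (∀ i j (t k : Fin NT), t ≤ k → X i j t k ≤ d i k * y j t)

/-- Objective with time-independent costs: purchase, transaction and holding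
(`(k − t)·H_i` per unit purchased at `t` for period `k`). -/
def cost (P : Fin NI → Fin NJ → ℝ) (O : Fin NJ → ℝ) (H : Fin NI → ℝ)
    (X : Fin NI → Fin NJ → Fin NT → Fin NT → ℝ) (y : Fin NJ → Fin NT → ℝ) : ℝ :=
  (∑ i : Fin NI, ∑ j : Fin NJ, ∑ k : Fin NT, ∑ t ∈ Finset.Iic k,
      (P i j + (((k : ℕ) : ℝ) - ((t : ℕ) : ℝ)) * H i) * X i j t k) +
    ∑ j : Fin NJ, ∑ t : Fin NT, O j * y j t

def openArcs (y : Fin NJ → Fin NT → ℝ) (k : Fin NT) : Set (Fin NJ × Fin NT) :=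
  {a | a.2 ≤ k ∧ y a.1 a.2 = 1}

theorem openArcs_mono (y : Fin NJ → Fin NT → ℝ) : Monotone (openArcs y) :=
  fun _ _ hk _ ha => ⟨ha.1.trans hk, ha.2⟩

section Feasibility

variable {d : Fin NI → Fin NT → ℝ} {X : Fin NI → Fin NJ → Fin NT → Fin NT → ℝ}
  {y : Fin NJ → Fin NT → ℝ}

theorem FeasFL.demand_nonneg (h : FeasFL d X y) (i : Fin NI) (k : Fin NT) : 0 ≤ d i k := by
  rw [← h.2.2.2.1 i k]
  exact Finset.sum_nonneg fun j _ => Finset.sum_nonneg fun t _ => h.2.1 i j t k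

theorem FeasFL.le_demand (h : FeasFL d X y) (i : Fin NI) (j : Fin NJ) (t k : Fin NT) :
    X i j t k ≤ d i k := by
  by_cases htk : t ≤ k
  · calc X i j t k ≤ d i k * y j t := h.2.2.2.2 i j t k htk
      _ ≤ d i k := by rcases h.1 j t with hy | hy <;> simp [hy, h.demand_nonneg i k]
  · exact (h.2.2.1 i j t k htk).le.trans (h.demand_nonneg i k)

theorem FeasFL.mem_openArcs_of_pos (h : FeasFL d X y) {i : Fin NI} {j : Fin NJ} {t k : Fin NT}
    (hpos : 0 < X i j t k) : (j, t) ∈ openArcs y k := by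
  have htk : t ≤ k := by
    by_contra htk
    exact hpos.ne' (h.2.2.1 i j t k htk)
  refine ⟨htk, (h.1 j t).resolve_left fun hy => ?_⟩
  have := h.2.2.2.2 i j t k htk
  rw [hy, mul_zero] at this
  exact this.not_gt hpos

theorem isClosed_setOf_feasFL (d : Fin NI → Fin NT → ℝ) :
    IsClosed {p : (Fin NI → Fin NJ → Fin NT → Fin NT → ℝ) × (Fin NJ → Fin NT → ℝ) |
      FeasFL d p.1 p.2} := by
  simp only [FeasFL, Set.ofPred_and, Set.ofPred_forall, Set.ofPred_or]
  repeat' first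
    | refine .inter ?_ ?_
    | refine .union ?_ ?_
    | refine isClosed_iInter fun _ => ?_
    | exact isClosed_eq (by fun_prop) (by fun_prop)
    | exact isClosed_le (by fun_prop) (by fun_prop)

theorem isCompact_setOf_feasFL (d : Fin NI → Fin NT → ℝ) :
    IsCompact {p : (Fin NI → Fin NJ → Fin NT → Fin NT → ℝ) × (Fin NJ → Fin NT → ℝ) |
      FeasFL d p.1 p.2} := by
  refine (isCompact_Icc (a := (0, 0)) (b := (fun i _ _ k => d i k, 1))).of_isClosed_subset
    (isClosed_setOf_feasFL d) fun p hp => ?_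
  have hy : ∀ j t, 0 ≤ p.2 j t ∧ p.2 j t ≤ 1 := fun j t => by
    rcases hp.1 j t with hy | hy <;> simp [hy]
  simp only [Set.mem_Icc, Prod.le_def, Pi.le_def]
  exact ⟨⟨hp.2.1, fun j t => (hy j t).1⟩, hp.le_demand, fun j t => (hy j t).2⟩

theorem exists_feasFL_forall_cost_le (P : Fin NI → Fin NJ → ℝ) (O : Fin NJ → ℝ)
    (H : Fin NI → ℝ)
    (hfeas : ∃ (X : Fin NI → Fin NJ → Fin NT → Fin NT → ℝ) (y : Fin NJ → Fin NT → ℝ),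
      FeasFL d X y) :
    ∃ X y, FeasFL d X y ∧ ∀ X' y', FeasFL d X' y' → cost P O H X y ≤ cost P O H X' y' := by
  obtain ⟨X, y, h⟩ := hfeas
  have hcont : Continuous fun p : (Fin NI → Fin NJ → Fin NT → Fin NT → ℝ) ×
      (Fin NJ → Fin NT → ℝ) => cost P O H p.1 p.2 := by
    unfold cost
    fun_prop
  obtain ⟨⟨X₀, y₀⟩, h₀, hmin⟩ :=
    (isCompact_setOf_feasFL d).exists_isMinOn ⟨(X, y), h⟩ hcont.continuousOn
  exact ⟨X₀, y₀, h₀, fun X' y' h' => hmin (a := (X', y')) h'⟩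

end Feasibility

def arcKey (P : Fin NI → Fin NJ → ℝ) (H : Fin NI → ℝ) (i : Fin NI) (a : Fin NJ × Fin NT) :
    ℝ ×ₗ (Fin NT ×ₗ Fin NJ) :=
  toLex (P i a.1 - ((a.2 : ℕ) : ℝ) * H i, toLex (a.2, a.1))

section CheapestArc

variable {P : Fin NI → Fin NJ → ℝ} {H : Fin NI → ℝ} {y : Fin NJ → Fin NT → ℝ} {i : Fin NI}

theorem arcKey_injective : Function.Injective (arcKey (NT := NT) P H i) := by
  intro a b hab
  have := congrArg (fun x : ℝ ×ₗ (Fin NT ×ₗ Fin NJ) => ofLex (ofLex x).2) hab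
  simp only [arcKey, ofLex_toLex, Prod.mk.injEq] at this
  exact Prod.ext this.2 this.1

theorem unitCost_le_of_arcKey_le {a b : Fin NJ × Fin NT} (hab : arcKey P H i a ≤ arcKey P H i b)
    (k : Fin NT) :
    P i a.1 + (((k : ℕ) : ℝ) - ((a.2 : ℕ) : ℝ)) * H i ≤
      P i b.1 + (((k : ℕ) : ℝ) - ((b.2 : ℕ) : ℝ)) * H i := by
  have := Prod.Lex.monotone_fst _ _ hab
  simp only [arcKey, ofLex_toLex] at this
  linarith

def IsCheapestOpenArc (P : Fin NI → Fin NJ → ℝ) (H : Fin NI → ℝ) (y : Fin NJ → Fin NT → ℝ)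
    (i : Fin NI) (k : Fin NT) (a : Fin NJ × Fin NT) : Prop :=
  a ∈ openArcs y k ∧ IsMinOn (arcKey P H i) (openArcs y k) a

theorem IsCheapestOpenArc.unique {k : Fin NT} {a b : Fin NJ × Fin NT}
    (ha : IsCheapestOpenArc P H y i k a) (hb : IsCheapestOpenArc P H y i k b) : a = b :=
  arcKey_injective ((isMinOn_iff.mp ha.2 b hb.1).antisymm (isMinOn_iff.mp hb.2 a ha.1))

theorem exists_isCheapestOpenArc {k : Fin NT} (hne : (openArcs y k).Nonempty) :
    ∃ a, IsCheapestOpenArc P H y i k a := by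
  obtain ⟨a, ha, hmin⟩ := Set.exists_min_image _ (arcKey P H i) (Set.toFinite _) hne
  exact ⟨a, ha, isMinOn_iff.mpr hmin⟩

theorem IsCheapestOpenArc.of_le_of_le {k₁ k' k₂ : Fin NT} {a : Fin NJ × Fin NT}
    (h₁ : IsCheapestOpenArc P H y i k₁ a) (h₂ : IsCheapestOpenArc P H y i k₂ a)
    (hk₁ : k₁ ≤ k') (hk₂ : k' ≤ k₂) : IsCheapestOpenArc P H y i k' a :=
  ⟨openArcs_mono y hk₁ h₁.1, h₂.2.on_subset (openArcs_mono y hk₂)⟩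

end CheapestArc

open Classical in
noncomputable def cheapestArcFlow (P : Fin NI → Fin NJ → ℝ) (H : Fin NI → ℝ)
    (d : Fin NI → Fin NT → ℝ) (y : Fin NJ → Fin NT → ℝ) :
    Fin NI → Fin NJ → Fin NT → Fin NT → ℝ :=
  fun i j t k => if IsCheapestOpenArc P H y i k (j, t) then d i k else 0

section CheapestArcFlow

variable {P : Fin NI → Fin NJ → ℝ} {H : Fin NI → ℝ} {d : Fin NI → Fin NT → ℝ}
  {X : Fin NI → Fin NJ → Fin NT → Fin NT → ℝ} {y : Fin NJ → Fin NT → ℝ} {i : Fin NI} {k : Fin NT}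

theorem sum_mul_cheapestArcFlow {a : Fin NJ × Fin NT} (ha : IsCheapestOpenArc P H y i k a)
    (g : Fin NJ → Fin NT → ℝ) :
    ∑ j, ∑ t ∈ Finset.Iic k, g j t * cheapestArcFlow P H d y i j t k = g a.1 a.2 * d i k := by
  rw [← Finset.sum_product' (f := fun j t => g j t * cheapestArcFlow P H d y i j t k),
    Finset.sum_eq_single_of_mem a (by simpa using ha.1.1)]
  · simp [cheapestArcFlow, ha]
  · intro b _ hb
    have hb' : ¬ IsCheapestOpenArc P H y i k b := fun hb' => hb (hb'.unique ha)
    simp only [cheapestArcFlow, Prod.mk.eta, if_neg hb', mul_zero]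

theorem FeasFL.eq_zero_of_forall_not_isCheapestOpenArc (h : FeasFL d X y)
    (hno : ∀ a, ¬ IsCheapestOpenArc P H y i k a) (j : Fin NJ) (t : Fin NT) : X i j t k = 0 := by
  by_contra hX
  obtain ⟨a, ha⟩ := exists_isCheapestOpenArc (P := P) (H := H) (i := i)
    ⟨_, h.mem_openArcs_of_pos ((h.2.1 i j t k).lt_of_ne' hX)⟩
  exact hno a ha

theorem feasFL_cheapestArcFlow (h : FeasFL d X y) : FeasFL d (cheapestArcFlow P H d y) y := by
  refine ⟨h.1, fun i j t k => ?_, fun i j t k htk => ?_, fun i k => ?_, fun i j t k _ => ?_⟩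
  · unfold cheapestArcFlow
    split_ifs
    exacts [h.demand_nonneg i k, le_rfl]
  · exact if_neg fun ha => htk ha.1.1
  · by_cases hex : ∃ a, IsCheapestOpenArc P H y i k a
    · obtain ⟨a, ha⟩ := hex
      simpa using sum_mul_cheapestArcFlow (d := d) ha fun _ _ => 1
    · push Not at hex
      rw [← h.2.2.2.1 i k]
      simp [cheapestArcFlow, hex, h.eq_zero_of_forall_not_isCheapestOpenArc hex]
  · unfold cheapestArcFlow
    split_ifs with ha
    · rw [ha.1.2, mul_one]
    · rcases h.1 j t with hy | hy <;> simp [hy, h.demand_nonneg i k]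

theorem sum_mul_cheapestArcFlow_le (h : FeasFL d X y) (i : Fin NI) (k : Fin NT) :
    ∑ j, ∑ t ∈ Finset.Iic k,
        (P i j + (((k : ℕ) : ℝ) - ((t : ℕ) : ℝ)) * H i) * cheapestArcFlow P H d y i j t k ≤
      ∑ j, ∑ t ∈ Finset.Iic k, (P i j + (((k : ℕ) : ℝ) - ((t : ℕ) : ℝ)) * H i) * X i j t k := by
  by_cases hex : ∃ a, IsCheapestOpenArc P H y i k a
  · obtain ⟨a, ha⟩ := hex
    rw [sum_mul_cheapestArcFlow ha, ← h.2.2.2.1 i k, Finset.mul_sum]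
    refine Finset.sum_le_sum fun j _ => ?_
    rw [Finset.mul_sum]
    refine Finset.sum_le_sum fun t _ => ?_
    rcases (h.2.1 i j t k).eq_or_lt with hX | hX
    · simp [← hX]
    · exact mul_le_mul_of_nonneg_right
        (unitCost_le_of_arcKey_le (isMinOn_iff.mp ha.2 _ (h.mem_openArcs_of_pos hX)) k) hX.le
  · push Not at hex
    simp [cheapestArcFlow, hex, h.eq_zero_of_forall_not_isCheapestOpenArc hex]

theorem cost_cheapestArcFlow_le (h : FeasFL d X y) (O : Fin NJ → ℝ) :
    cost P O H (cheapestArcFlow P H d y) y ≤ cost P O H X y := by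
  unfold cost
  refine add_le_add_left (Finset.sum_le_sum fun i _ => ?_) _
  rw [Finset.sum_comm, Finset.sum_comm (γ := Fin NJ)]
  exact Finset.sum_le_sum fun k _ => sum_mul_cheapestArcFlow_le h i k

theorem cheapestArcFlow_eq_of_pos_of_pos {j : Fin NJ} {t k₁ k' k₂ : Fin NT} (hk₁ : k₁ ≤ k')
    (hk₂ : k' ≤ k₂) (h₁ : 0 < cheapestArcFlow P H d y i j t k₁)
    (h₂ : 0 < cheapestArcFlow P H d y i j t k₂) : cheapestArcFlow P H d y i j t k' = d i k' := by
  have isCheapest_of_pos {k : Fin NT} (hk : 0 < cheapestArcFlow P H d y i j t k) :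
      IsCheapestOpenArc P H y i k (j, t) := by
    by_contra hno
    simp [cheapestArcFlow, hno] at hk
  exact if_pos ((isCheapest_of_pos h₁).of_le_of_le (isCheapest_of_pos h₂) hk₁ hk₂)

end CheapestArcFlow

theorem exists_consecutive_coverage_optimal_general
    (NI NJ NT : ℕ)
    (d : Fin NI → Fin NT → ℝ)
    (P : Fin NI → Fin NJ → ℝ) (O : Fin NJ → ℝ) (H : Fin NI → ℝ)
    (hfeas : ∃ (X : Fin NI → Fin NJ → Fin NT → Fin NT → ℝ) (y : Fin NJ → Fin NT → ℝ),
      FeasFL d X y) :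
    ∃ (X : Fin NI → Fin NJ → Fin NT → Fin NT → ℝ) (y : Fin NJ → Fin NT → ℝ),
      FeasFL d X y ∧
      (∀ (X' : Fin NI → Fin NJ → Fin NT → Fin NT → ℝ) (y' : Fin NJ → Fin NT → ℝ),
        FeasFL d X' y' → cost P O H X y ≤ cost P O H X' y') ∧
      (∀ i j (t k₁ k' k₂ : Fin NT), t ≤ k₁ → k₁ < k' → k' < k₂ →
        0 < X i j t k₁ → 0 < X i j t k₂ → 0 < d i k' → X i j t k' = d i k') := by
  obtain ⟨X, y, hX, hopt⟩ := exists_feasFL_forall_cost_le P O H hfeas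
  refine ⟨cheapestArcFlow P H d y, y, feasFL_cheapestArcFlow hX,
    fun X' y' h' => (cost_cheapestArcFlow_le hX O).trans (hopt X' y' h'), ?_⟩
  intro i j t k₁ k' k₂ _ hk₁ hk₂ h₁ h₂ _
  exact cheapestArcFlow_eq_of_pos_of_pos hk₁.le hk₂.le h₁ h₂

/-- Existence of a zero-inventory-ordering (consecutive-coverage)
optimal solution: for the facility location formulation with time-independent
nonnegative costs there is an optimal solution in which, for every item `i` and
supplier `j`, the demand periods served by a purchase at period `t` form an interval
of consecutive periods; more precisely, every intermediate period with positive
demand is served entirely by that purchase (`X i j t k' = d i k'`). -/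
theorem exists_consecutive_coverage_optimal
    (NI NJ NT : ℕ)
    (d : Fin NI → Fin NT → ℝ) (hd : ∀ i k, 0 ≤ d i k)
    (P : Fin NI → Fin NJ → ℝ) (O : Fin NJ → ℝ) (H : Fin NI → ℝ)
    (hP : ∀ i j, 0 ≤ P i j) (hO : ∀ j, 0 ≤ O j) (hH : ∀ i, 0 ≤ H i)
    (hfeas : ∃ (X : Fin NI → Fin NJ → Fin NT → Fin NT → ℝ) (y : Fin NJ → Fin NT → ℝ),
      FeasFL d X y) :
    ∃ (X : Fin NI → Fin NJ → Fin NT → Fin NT → ℝ) (y : Fin NJ → Fin NT → ℝ),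
      FeasFL d X y ∧
      (∀ (X' : Fin NI → Fin NJ → Fin NT → Fin NT → ℝ) (y' : Fin NJ → Fin NT → ℝ),
        FeasFL d X' y' → cost P O H X y ≤ cost P O H X' y') ∧
      (∀ i j (t k₁ k' k₂ : Fin NT), t ≤ k₁ → k₁ < k' → k' < k₂ →
        0 < X i j t k₁ → 0 < X i j t k₂ → 0 < d i k' → X i j t k' = d i k') :=
  exists_consecutive_coverage_optimal_general NI NJ NT d P O H hfeas

end ZIO
end
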